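/- arXiv:2303.12819 — 9 statements merged into one kernel-verified Lean document; each statement's English description precedes it below -/
import Mathlib

section
/- Fix d ≥ 1 and n ≥ 1, and for a subset 𝒜 ⊆ Fin n let H_𝒜 denote the Hilbert space ⊗_{i∈𝒜} ℂ^d (operators on it identified with matrices indexed by functions 𝒜 → Fin d). Let 𝒜₁, …, 𝒜_k ⊆ Fin n with ∪_i 𝒜_i = Fin n, and for each i let R_i be a Hermitian trace-one operator on H_{𝒜_i}. Assume the family is compatible: for all i, j, the partial trace of R_i over 𝒜_i \ (𝒜_i ∩ 𝒜_j) equals the partial trace of R_j over 𝒜_j \ (𝒜_i ∩ 𝒜_j). Then there exists a Hermitian trace-one operator R on H_{Fin n} such that for every i, the partial trace of R over the complement of 𝒜_i equals R_i. -/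
open Matrix

/-- Merge a function defined on a subset `t` with a function defined on `s \ t`
into a function defined on `s`. -/
def mergeFn {n d : ℕ} (s t : Finset (Fin n))
    (f : {x // x ∈ t} → Fin d) (h : {x // x ∈ s \ t} → Fin d)
    (x : {x // x ∈ s}) : Fin d :=
  if hx : (x : Fin n) ∈ t then f ⟨x, hx⟩
  else h ⟨x, Finset.mem_sdiff.mpr ⟨x.2, hx⟩⟩

/-- Partial trace of an operator on `⊗_{i ∈ s} ℂ^d` (a matrix indexed by
functions `s → Fin d`) down to the factors in `t`, tracing out `s \ t`. -/
noncomputable def ptr {n d : ℕ} (s t : Finset (Fin n))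
    (M : Matrix ({x // x ∈ s} → Fin d) ({x // x ∈ s} → Fin d) ℂ) :
    Matrix ({x // x ∈ t} → Fin d) ({x // x ∈ t} → Fin d) ℂ :=
  fun f g => ∑ h : {x // x ∈ s \ t} → Fin d,
    M (mergeFn s t f h) (mergeFn s t g h)

namespace Herm1Aux

abbrev F (d : ℕ) {n : ℕ} (s : Finset (Fin n)) := {x // x ∈ s} → Fin d

variable {n d : ℕ}

/-- restriction of a function to a subset -/
def rs {s t : Finset (Fin n)} (h : t ⊆ s) (f : F d s) : F d t := fun x => f ⟨x, h x.2⟩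

/-- gluing equiv for a disjoint decomposition -/
def glue (a b s : Finset (Fin n)) (hab : Disjoint a b) (hs : a ∪ b = s) :
    (F d a × F d b) ≃ F d s where
  toFun p x := if hx : (x : Fin n) ∈ a then p.1 ⟨x, hx⟩ else p.2 ⟨x, by
    have hx2 : (x : Fin n) ∈ a ∪ b := by rw [hs]; exact x.2
    rcases Finset.mem_union.mp hx2 with h | h
    · exact absurd h hx
    · exact h⟩
  invFun f := (fun x => f ⟨x, by rw [← hs]; exact Finset.mem_union_left _ x.2⟩,
               fun x => f ⟨x, by rw [← hs]; exact Finset.mem_union_right _ x.2⟩)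
  left_inv := by
    rintro ⟨f, g⟩
    refine Prod.ext (funext fun x => ?_) (funext fun x => ?_)
    · simp only [dif_pos x.2]
    · have : (x : Fin n) ∉ a := Finset.disjoint_right.mp hab x.2
      simp only [dif_neg this]
  right_inv := by
    intro f
    funext x
    by_cases hx : (x : Fin n) ∈ a
    · simp only [dif_pos hx]
    · simp only [dif_neg hx]

lemma glue_apply_left {a b s : Finset (Fin n)} (hab : Disjoint a b) (hs : a ∪ b = s)
    (f : F d a) (g : F d b) (x : {x // x ∈ s}) (hx : (x : Fin n) ∈ a) :
    glue a b s hab hs (f, g) x = f ⟨x, hx⟩ := by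
  simp only [glue, Equiv.coe_fn_mk, dif_pos hx]

lemma glue_apply_right {a b s : Finset (Fin n)} (hab : Disjoint a b) (hs : a ∪ b = s)
    (f : F d a) (g : F d b) (x : {x // x ∈ s}) (hx : (x : Fin n) ∈ b) :
    glue a b s hab hs (f, g) x = g ⟨x, hx⟩ := by
  have : (x : Fin n) ∉ a := Finset.disjoint_right.mp hab hx
  simp only [glue, Equiv.coe_fn_mk, dif_neg this]

lemma mergeFn_eq_glue {s t : Finset (Fin n)} (ht : t ⊆ s)
    (f : F d t) (h : F d (s \ t)) :
    mergeFn s t f h =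
      glue t (s \ t) s (Finset.disjoint_sdiff) (Finset.union_sdiff_of_subset ht) (f, h) := by
  funext x
  by_cases hx : (x : Fin n) ∈ t
  · rw [glue_apply_left _ _ _ _ _ hx]; simp only [mergeFn, dif_pos hx]
  · rw [glue_apply_right _ _ _ _ _ (Finset.mem_sdiff.mpr ⟨x.2, hx⟩)]
    simp only [mergeFn, dif_neg hx]

/-- transport along an equality of index sets -/
def castD {a b : Finset (Fin n)} (h : a = b) : F d a ≃ F d b where
  toFun f x := f ⟨x, h ▸ x.2⟩
  invFun f x := f ⟨x, h.symm ▸ x.2⟩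
  left_inv f := rfl
  right_inv f := rfl

lemma ptr_apply {s t : Finset (Fin n)} (M : Matrix (F d s) (F d s) ℂ) (f g : F d t) :
    ptr s t M f g = ∑ h : F d (s \ t), M (mergeFn s t f h) (mergeFn s t g h) := rfl

lemma sdiff_disj {t u s : Finset (Fin n)} : Disjoint (t \ u) (s \ t) := by
  rw [Finset.disjoint_left]; intro x hx hy
  exact (Finset.mem_sdiff.mp hy).2 (Finset.mem_sdiff.mp hx).1

lemma sdiff_union_eq {u t s : Finset (Fin n)} (hu : u ⊆ t) (ht : t ⊆ s) :
    (t \ u) ∪ (s \ t) = s \ u := by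
  ext x
  simp only [Finset.mem_union, Finset.mem_sdiff]
  constructor
  · rintro (⟨h1, h2⟩ | ⟨h1, h2⟩)
    · exact ⟨ht h1, h2⟩
    · exact ⟨h1, fun hx => h2 (hu hx)⟩
  · rintro ⟨h1, h2⟩
    by_cases hx : x ∈ t
    · exact Or.inl ⟨hx, h2⟩
    · exact Or.inr ⟨h1, hx⟩

lemma glue_assoc {u t s : Finset (Fin n)} (hu : u ⊆ t) (ht : t ⊆ s)
    (f : F d u) (h₁ : F d (t \ u)) (h₂ : F d (s \ t)) :
    glue u (s \ u) s Finset.disjoint_sdiff (Finset.union_sdiff_of_subset (hu.trans ht))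
      (f, glue (t \ u) (s \ t) (s \ u) sdiff_disj (sdiff_union_eq hu ht) (h₁, h₂)) =
    glue t (s \ t) s Finset.disjoint_sdiff (Finset.union_sdiff_of_subset ht)
      (glue u (t \ u) t Finset.disjoint_sdiff (Finset.union_sdiff_of_subset hu) (f, h₁), h₂) := by
  funext x
  simp only [glue, Equiv.coe_fn_mk]
  by_cases hxu : (x : Fin n) ∈ u <;> by_cases hxt : (x : Fin n) ∈ t <;>
    simp [hxu, hxt, Finset.mem_sdiff] <;> first
    | rfl
    | exact absurd (hu hxu) hxt

lemma ptr_ptr {u t s : Finset (Fin n)} (hu : u ⊆ t) (ht : t ⊆ s)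
    (M : Matrix (F d s) (F d s) ℂ) :
    ptr t u (ptr s t M) = ptr s u M := by
  ext f g
  simp only [ptr_apply]
  rw [← Equiv.sum_comp (glue (t \ u) (s \ t) (s \ u) sdiff_disj (sdiff_union_eq hu ht))
    (fun h => M (mergeFn s u f h) (mergeFn s u g h)), Fintype.sum_prod_type]
  refine Finset.sum_congr rfl fun h₁ _ => Finset.sum_congr rfl fun h₂ _ => ?_
  have key : ∀ p : F d u,
      mergeFn s u p (glue (t \ u) (s \ t) (s \ u) sdiff_disj (sdiff_union_eq hu ht) (h₁, h₂))
        = mergeFn s t (mergeFn t u p h₁) h₂ := by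
    intro p
    rw [mergeFn_eq_glue (hu.trans ht), mergeFn_eq_glue ht, mergeFn_eq_glue hu,
      glue_assoc hu ht]
  rw [key f, key g]

lemma ptr_self {s : Finset (Fin n)} (M : Matrix (F d s) (F d s) ℂ) :
    ptr s s M = M := by
  have hie : IsEmpty {x : Fin n // x ∈ s \ s} := ⟨fun x => by simpa using x.2⟩
  have hm : ∀ (f : F d s) (h : F d (s \ s)), mergeFn s s f h = f := by
    intro f h
    funext x
    simp only [mergeFn, dif_pos x.2]
  ext f g
  rw [ptr_apply]
  rw [Fintype.sum_unique]
  rw [hm, hm]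

lemma ptr_trace {t s : Finset (Fin n)} (ht : t ⊆ s) (M : Matrix (F d s) (F d s) ℂ) :
    (ptr s t M).trace = M.trace := by
  simp only [Matrix.trace, Matrix.diag, ptr_apply]
  rw [← Equiv.sum_comp (glue t (s \ t) s Finset.disjoint_sdiff
      (Finset.union_sdiff_of_subset ht)) (fun q => M q q), Fintype.sum_prod_type]
  refine Finset.sum_congr rfl fun f _ => Finset.sum_congr rfl fun h _ => ?_
  rw [mergeFn_eq_glue ht]

lemma ptr_add {t s : Finset (Fin n)} (M N : Matrix (F d s) (F d s) ℂ) :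
    ptr s t (M + N) = ptr s t M + ptr s t N := by
  ext f g
  simp only [Matrix.add_apply, ptr_apply, Finset.sum_add_distrib]

lemma ptr_smul {t s : Finset (Fin n)} (c : ℂ) (M : Matrix (F d s) (F d s) ℂ) :
    ptr s t (c • M) = c • ptr s t M := by
  ext f g
  simp only [Matrix.smul_apply, ptr_apply, smul_eq_mul, Finset.mul_sum]

lemma ptr_conjTranspose {t s : Finset (Fin n)} (M : Matrix (F d s) (F d s) ℂ) :
    ptr s t Mᴴ = (ptr s t M)ᴴ := by
  ext f g
  simp only [Matrix.conjTranspose_apply, ptr_apply, star_sum]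

lemma ptr_sum {t s : Finset (Fin n)} {ι : Type*} (𝒮 : Finset ι)
    (f : ι → Matrix (F d s) (F d s) ℂ) :
    ptr s t (∑ i ∈ 𝒮, f i) = ∑ i ∈ 𝒮, ptr s t (f i) := by
  ext a b
  simp only [ptr_apply, Finset.sum_apply, Matrix.sum_apply]
  rw [Finset.sum_comm]

/-- lift an operator on factors `t` to factors `s ⊇ t` by tensoring with the
normalized identity -/
noncomputable def liftM {t s : Finset (Fin n)} (ht : t ⊆ s)
    (X : Matrix (F d t) (F d t) ℂ) : Matrix (F d s) (F d s) ℂ :=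
  fun f g =>
    (if rs (Finset.sdiff_subset : s \ t ⊆ s) f = rs Finset.sdiff_subset g
      then X (rs ht f) (rs ht g) else 0) * ((d : ℂ) ^ (s \ t).card)⁻¹

lemma rs_rfl {s : Finset (Fin n)} (f : F d s) : rs (subset_refl s) f = f := rfl

lemma liftM_self {s : Finset (Fin n)} (X : Matrix (F d s) (F d s) ℂ) :
    liftM (subset_refl s) X = X := by
  have hie : IsEmpty {x : Fin n // x ∈ s \ s} := ⟨fun x => by simpa using x.2⟩
  ext f g
  unfold liftM
  rw [if_pos (Subsingleton.elim _ _), rs_rfl, rs_rfl, Finset.sdiff_self,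
    Finset.card_empty, pow_zero, inv_one, mul_one]


section PtrLift

variable {t u s : Finset (Fin n)}

lemma disj2 : Disjoint (t \ u) (s \ (t ∪ u)) := by
  rw [Finset.disjoint_left]; intro x hx hy
  simp only [Finset.mem_sdiff, Finset.mem_union] at hx hy
  exact hy.2 (Or.inl hx.1)

lemma un2 (ht : t ⊆ s) : (t \ u) ∪ (s \ (t ∪ u)) = s \ u := by
  ext x
  simp only [Finset.mem_union, Finset.mem_sdiff, Finset.mem_union]
  constructor
  · rintro (⟨h1, h2⟩ | ⟨h1, h2⟩)
    · exact ⟨ht h1, h2⟩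
    · exact ⟨h1, fun h => h2 (Or.inr h)⟩
  · rintro ⟨h1, h2⟩
    by_cases hx : x ∈ t
    · exact Or.inl ⟨hx, h2⟩
    · refine Or.inr ⟨h1, fun h => ?_⟩
      rcases h with h | h
      exacts [hx h, h2 h]

lemma disj3 : Disjoint (t ∩ u) (t \ u) := by
  rw [Finset.disjoint_left]; intro x hx hy
  exact (Finset.mem_sdiff.mp hy).2 (Finset.mem_inter.mp hx).2

lemma un3 : (t ∩ u) ∪ (t \ u) = t := by
  ext x
  simp only [Finset.mem_union, Finset.mem_inter, Finset.mem_sdiff]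
  tauto

lemma disj4 : Disjoint (u \ t) (s \ (t ∪ u)) := by
  rw [Finset.disjoint_left]; intro x hx hy
  simp only [Finset.mem_sdiff, Finset.mem_union] at hx hy
  exact hy.2 (Or.inr hx.1)

lemma un4 (hu : u ⊆ s) : (u \ t) ∪ (s \ (t ∪ u)) = s \ t := by
  ext x
  simp only [Finset.mem_union, Finset.mem_sdiff, Finset.mem_union]
  constructor
  · rintro (⟨h1, h2⟩ | ⟨h1, h2⟩)
    · exact ⟨hu h1, h2⟩
    · exact ⟨h1, fun h => h2 (Or.inl h)⟩
  · rintro ⟨h1, h2⟩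
    by_cases hx : x ∈ u
    · exact Or.inl ⟨hx, h2⟩
    · refine Or.inr ⟨h1, fun h => ?_⟩
      rcases h with h | h
      exacts [h2 h, hx h]

lemma claim1 (ht : t ⊆ s) (hu : u ⊆ s) (p : F d u)
    (h₁ : F d (t \ u)) (h₂ : F d (s \ (t ∪ u))) :
    rs ht (mergeFn s u p
        (glue (t \ u) (s \ (t ∪ u)) (s \ u) disj2 (un2 ht) (h₁, h₂)))
      = glue (t ∩ u) (t \ u) t disj3 un3 (rs Finset.inter_subset_right p, h₁) := by
  funext x
  simp only [rs, mergeFn, glue, Equiv.coe_fn_mk]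
  by_cases hxu : (x : Fin n) ∈ u
  · simp [hxu, Finset.mem_inter, x.2]
  · simp [hxu, Finset.mem_inter, Finset.mem_sdiff, x.2]

lemma claim2 (ht : t ⊆ s) (hu : u ⊆ s) (p : F d u)
    (h₁ : F d (t \ u)) (h₂ : F d (s \ (t ∪ u))) :
    rs Finset.sdiff_subset (mergeFn s u p
        (glue (t \ u) (s \ (t ∪ u)) (s \ u) disj2 (un2 ht) (h₁, h₂)))
      = glue (u \ t) (s \ (t ∪ u)) (s \ t) disj4 (un4 hu)
          (rs Finset.sdiff_subset p, h₂) := by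
  funext x
  have hxs : (x : Fin n) ∈ s := (Finset.mem_sdiff.mp x.2).1
  have hxt : (x : Fin n) ∉ t := (Finset.mem_sdiff.mp x.2).2
  simp only [rs, mergeFn, glue, Equiv.coe_fn_mk]
  by_cases hxu : (x : Fin n) ∈ u
  · simp [hxu, hxt, Finset.mem_sdiff]
  · simp [hxu, hxt, hxs, Finset.mem_sdiff]

lemma claim3 (heq1 : t \ (t ∩ u) = t \ u) (a : F d (t ∩ u)) (h₁ : F d (t \ u)) :
    mergeFn t (t ∩ u) a ((castD heq1).symm h₁)
      = glue (t ∩ u) (t \ u) t disj3 un3 (a, h₁) := by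
  funext x
  simp only [mergeFn, castD, glue, Equiv.coe_fn_mk, Equiv.coe_fn_symm_mk]

lemma glue_pair_eq_iff {a b s : Finset (Fin n)} (hab : Disjoint a b) (hs : a ∪ b = s)
    (p q : F d a) (h : F d b) :
    glue a b s hab hs (p, h) = glue a b s hab hs (q, h) ↔ p = q := by
  rw [Equiv.apply_eq_iff_eq, Prod.mk.injEq]
  simp

lemma rs_cast_eq_iff {w w' u : Finset (Fin n)} (hww : w = w')
    (h1 : w ⊆ u) (h2 : w' ⊆ u) (f g : F d u) :
    rs h1 f = rs h1 g ↔ rs h2 f = rs h2 g := by subst hww; exact Iff.rfl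

end PtrLift

lemma ptr_lift (hd : d ≠ 0) {t u s : Finset (Fin n)} (ht : t ⊆ s) (hu : u ⊆ s)
    (X : Matrix (F d t) (F d t) ℂ) :
    ptr s u (liftM ht X)
      = liftM (Finset.inter_subset_right : t ∩ u ⊆ u) (ptr t (t ∩ u) X) := by
  have heq1 : t \ (t ∩ u) = t \ u := by
    ext x; simp only [Finset.mem_sdiff, Finset.mem_inter]; tauto
  have heq2 : u \ (t ∩ u) = u \ t := by
    ext x; simp only [Finset.mem_sdiff, Finset.mem_inter]; tauto
  ext f g
  rw [ptr_apply]
  rw [← Equiv.sum_comp (glue (t \ u) (s \ (t ∪ u)) (s \ u) disj2 (un2 ht))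
    (fun h => liftM ht X (mergeFn s u f h) (mergeFn s u g h)), Fintype.sum_prod_type]
  have key : ∀ (h₁ : F d (t \ u)) (h₂ : F d (s \ (t ∪ u))),
      liftM ht X
        (mergeFn s u f (glue (t \ u) (s \ (t ∪ u)) (s \ u) disj2 (un2 ht) (h₁, h₂)))
        (mergeFn s u g (glue (t \ u) (s \ (t ∪ u)) (s \ u) disj2 (un2 ht) (h₁, h₂)))
      = (if rs (Finset.sdiff_subset : u \ t ⊆ u) f = rs Finset.sdiff_subset g
          then X (glue (t ∩ u) (t \ u) t disj3 un3 (rs Finset.inter_subset_right f, h₁))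
                 (glue (t ∩ u) (t \ u) t disj3 un3 (rs Finset.inter_subset_right g, h₁))
          else 0) * ((d : ℂ) ^ (s \ t).card)⁻¹ := by
    intro h₁ h₂
    unfold liftM
    rw [claim1 ht hu f, claim1 ht hu g, claim2 ht hu f, claim2 ht hu g]
    simp only [glue_pair_eq_iff]
  simp only [key]
  by_cases hP : rs (Finset.sdiff_subset : u \ t ⊆ u) f = rs Finset.sdiff_subset g
  · simp only [if_pos hP]
    have hPc : rs (Finset.sdiff_subset : u \ (t ∩ u) ⊆ u) f = rs Finset.sdiff_subset g :=
      (rs_cast_eq_iff heq2 _ _ f g).mpr hP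
    show _ = liftM _ (ptr t (t ∩ u) X) f g
    unfold liftM
    rw [if_pos hPc, ptr_apply]
    rw [← Equiv.sum_comp (castD heq1).symm
      (fun h => X (mergeFn t (t ∩ u) (rs Finset.inter_subset_right f) h)
                  (mergeFn t (t ∩ u) (rs Finset.inter_subset_right g) h))]
    simp only [claim3 heq1]
    rw [Finset.sum_comm]
    simp only [Finset.sum_const, Finset.card_univ, nsmul_eq_mul]
    rw [← Finset.sum_mul, mul_left_comm]
    congr 1
    have hcard : (s \ t).card = (s \ (t ∪ u)).card + (u \ (t ∩ u)).card := by
      rw [heq2, ← un4 hu, Finset.card_union_of_disjoint disj4, Nat.add_comm]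
    have hNcard : Fintype.card (F d (s \ (t ∪ u))) = d ^ (s \ (t ∪ u)).card := by
      rw [Fintype.card_fun, Fintype.card_coe, Fintype.card_fin]
    rw [hNcard, hcard, pow_add, Nat.cast_pow, mul_inv]
    rw [← mul_assoc, mul_inv_cancel₀ (pow_ne_zero _ (Nat.cast_ne_zero.mpr hd)), one_mul]
  · simp only [if_neg hP, zero_mul, Finset.sum_const_zero]
    have hPc : ¬ (rs (Finset.sdiff_subset : u \ (t ∩ u) ⊆ u) f = rs Finset.sdiff_subset g) :=
      fun hc => hP ((rs_cast_eq_iff heq2 _ _ f g).mp hc)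
    show (0 : ℂ) = liftM _ (ptr t (t ∩ u) X) f g
    unfold liftM
    rw [if_neg hPc, zero_mul]

lemma lift_ptr_self_of_eq {u w : Finset (Fin n)} (h : w = u) (hw : w ⊆ u)
    (Y : Matrix (F d u) (F d u) ℂ) : liftM hw (ptr u w Y) = Y := by
  subst h
  rw [ptr_self]
  exact liftM_self Y

lemma lift_ptr_congr {u w w' : Finset (Fin n)} (h : w = w') (hw : w ⊆ u) (hw' : w' ⊆ u)
    (Y : Matrix (F d u) (F d u) ℂ) : liftM hw (ptr u w Y) = liftM hw' (ptr u w' Y) := by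
  subst h; rfl

lemma pairing {k : ℕ} {M : Type*} [AddCommGroup M] [Module ℂ M] (j : Fin k)
    (g : Finset (Fin k) → M)
    (hg : ∀ T : Finset (Fin k), j ∉ T → g (insert j T) = g T) :
    ∑ T ∈ Finset.univ.filter (fun T : Finset (Fin k) => T.Nonempty),
      ((-1 : ℂ) ^ (T.card + 1)) • g T = g {j} := by
  classical
  set S := Finset.univ.filter (fun T : Finset (Fin k) => T.Nonempty) with hS
  have hjS : ({j} : Finset (Fin k)) ∈ S := by
    simp [hS, Finset.singleton_nonempty]
  rw [← Finset.add_sum_erase S _ hjS]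
  have h1 : ((-1 : ℂ) ^ (({j} : Finset (Fin k)).card + 1)) • g {j} = g {j} := by
    norm_num
  have h0 : ∑ T ∈ S.erase {j}, ((-1 : ℂ) ^ (T.card + 1)) • g T = 0 := by
    refine Finset.sum_involution
      (fun T _ => if j ∈ T then T.erase j else insert j T) ?_ ?_ ?_ ?_
    · intro T hT
      by_cases hj : j ∈ T
      · simp only [if_pos hj]
        have hgT : g (T.erase j) = g T := by
          conv_rhs => rw [← Finset.insert_erase hj]
          exact (hg _ (Finset.notMem_erase j T)).symm
        have hc : T.card = (T.erase j).card + 1 := by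
          rw [Finset.card_erase_of_mem hj]
          have : 1 ≤ T.card := Finset.card_pos.mpr ⟨j, hj⟩
          omega
        rw [hgT, ← add_smul, hc]
        ring_nf
        simp [pow_succ]
      · simp only [if_neg hj]
        have hgT : g (insert j T) = g T := hg T hj
        have hc : (insert j T).card = T.card + 1 := Finset.card_insert_of_notMem hj
        rw [hgT, ← add_smul, hc]
        ring_nf
        simp [pow_succ]
    · intro T hT _
      by_cases hj : j ∈ T
      · simp only [if_pos hj]
        intro hEq
        exact (hEq ▸ Finset.notMem_erase j T) hj
      · simp only [if_neg hj]
        intro hEq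
        exact hj (hEq ▸ Finset.mem_insert_self j T)
    · intro T hT
      have hTne : T ≠ {j} := (Finset.mem_erase.mp hT).1
      have hTS : T ∈ S := (Finset.mem_erase.mp hT).2
      have hTnon : T.Nonempty := (Finset.mem_filter.mp hTS).2
      rw [Finset.mem_erase]
      by_cases hj : j ∈ T
      · simp only [if_pos hj]
        constructor
        · intro hEq
          exact (hEq ▸ Finset.notMem_erase j T) (Finset.mem_singleton_self j)
        · rw [hS, Finset.mem_filter]
          refine ⟨Finset.mem_univ _, ?_⟩
          rw [Finset.nonempty_iff_ne_empty]
          intro hEmpty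
          rcases (Finset.erase_eq_empty_iff T j).mp hEmpty with h | h
          · exact (Finset.nonempty_iff_ne_empty.mp hTnon) h
          · exact hTne h
      · simp only [if_neg hj]
        constructor
        · intro hEq
          obtain ⟨x, hx⟩ := hTnon
          have : x ∈ ({j} : Finset (Fin k)) := hEq ▸ Finset.mem_insert_of_mem hx
          exact hj (Finset.mem_singleton.mp this ▸ hx)
        · rw [hS, Finset.mem_filter]
          exact ⟨Finset.mem_univ _, Finset.insert_nonempty _ _⟩
    · intro T hT
      by_cases hj : j ∈ T
      · simp only [if_pos hj]
        rw [if_neg (Finset.notMem_erase j T)]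
        exact Finset.insert_erase hj
      · simp only [if_neg hj]
        rw [if_pos (Finset.mem_insert_self j T)]
        exact Finset.erase_insert hj
  rw [h1, h0, add_zero]

end Herm1Aux

open Herm1Aux in
/-- Herm₁ marginal problem: a compatible family of Hermitian
trace-one operators on the tensor-product Hilbert spaces attached to event
subsets `𝒜 i` covering `Fin n` always admits a global Hermitian trace-one
extension whose marginals are the given operators. -/
theorem herm1_marginal_problem
    (d n : ℕ) (hd : 1 ≤ d) (hn : 1 ≤ n) (k : ℕ)
    (𝒜 : Fin k → Finset (Fin n))
    (hcover : (Finset.univ.biUnion 𝒜) = Finset.univ)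
    (R : ∀ i : Fin k, Matrix ({x // x ∈ 𝒜 i} → Fin d) ({x // x ∈ 𝒜 i} → Fin d) ℂ)
    (hHerm : ∀ i, (R i).IsHermitian)
    (hTrace : ∀ i, (R i).trace = 1)
    (hcompat : ∀ i j : Fin k,
      ptr (𝒜 i) (𝒜 i ∩ 𝒜 j) (R i) = ptr (𝒜 j) (𝒜 i ∩ 𝒜 j) (R j)) :
    ∃ Rglob : Matrix ({x // x ∈ (Finset.univ : Finset (Fin n))} → Fin d)
        ({x // x ∈ (Finset.univ : Finset (Fin n))} → Fin d) ℂ,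
      Rglob.IsHermitian ∧ Rglob.trace = 1 ∧
      ∀ i : Fin k, ptr Finset.univ (𝒜 i) Rglob = R i := by
  classical
  have hd0 : d ≠ 0 := Nat.one_le_iff_ne_zero.mp hd
  have hx0 : (⟨0, hn⟩ : Fin n) ∈ Finset.univ.biUnion 𝒜 := by
    rw [hcover]; exact Finset.mem_univ _
  obtain ⟨j₀, -, -⟩ := Finset.mem_biUnion.mp hx0
  set A : Finset (Fin k) → Finset (Fin n) := fun T => T.inf 𝒜 with hA
  set idx : Finset (Fin k) → Fin k :=
    fun T => if h : T.Nonempty then T.min' h else j₀ with hidxdef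
  have hidx : ∀ (T : Finset (Fin k)) (hT : T.Nonempty), idx T ∈ T := by
    intro T hT
    simp only [hidxdef, dif_pos hT]
    exact T.min'_mem hT
  have hAsub : ∀ (T : Finset (Fin k)) (i : Fin k), i ∈ T → A T ⊆ 𝒜 i :=
    fun T i hi => Finset.inf_le hi
  set Z : ∀ T : Finset (Fin k), Matrix (F d (A T)) (F d (A T)) ℂ :=
    fun T => ptr (𝒜 (idx T)) (A T) (R (idx T)) with hZ
  have W2 : ∀ (i j : Fin k) (S : Finset (Fin n)), S ⊆ 𝒜 i ∩ 𝒜 j →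
      ptr (𝒜 i) S (R i) = ptr (𝒜 j) S (R j) := by
    intro i j S hS
    rw [← ptr_ptr hS Finset.inter_subset_left (R i), hcompat i j,
      ptr_ptr hS Finset.inter_subset_right]
  have master : ∀ (T : Finset (Fin k)), T.Nonempty → ∀ (j : Fin k),
      ptr Finset.univ (𝒜 j) (liftM (Finset.subset_univ (A T)) (Z T))
        = liftM (Finset.inter_subset_right : A T ∩ 𝒜 j ⊆ 𝒜 j)
            (ptr (𝒜 j) (A T ∩ 𝒜 j) (R j)) := by
    intro T hT j
    rw [ptr_lift hd0 (Finset.subset_univ _) (Finset.subset_univ _)]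
    refine congrArg _ ?_
    show ptr (A T) (A T ∩ 𝒜 j) (ptr (𝒜 (idx T)) (A T) (R (idx T))) = _
    rw [ptr_ptr Finset.inter_subset_left (hAsub T (idx T) (hidx T hT))]
    refine W2 (idx T) j _ ?_
    intro x hx
    rw [Finset.mem_inter] at hx ⊢
    exact ⟨(hAsub T _ (hidx T hT)) hx.1, hx.2⟩
  set Rg : Matrix (F d (Finset.univ : Finset (Fin n)))
      (F d (Finset.univ : Finset (Fin n))) ℂ :=
    ∑ T ∈ Finset.univ.filter (fun T : Finset (Fin k) => T.Nonempty),
      ((-1 : ℂ) ^ (T.card + 1)) • liftM (Finset.subset_univ (A T)) (Z T) with hRg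
  have hmargRg : ∀ j : Fin k, ptr Finset.univ (𝒜 j) Rg = R j := by
    intro j
    rw [hRg, ptr_sum]
    have hstep : ∀ T ∈ Finset.univ.filter (fun T : Finset (Fin k) => T.Nonempty),
        ptr Finset.univ (𝒜 j) (((-1 : ℂ) ^ (T.card + 1)) •
            liftM (Finset.subset_univ (A T)) (Z T))
          = ((-1 : ℂ) ^ (T.card + 1)) •
              liftM (Finset.inter_subset_right : A T ∩ 𝒜 j ⊆ 𝒜 j)
                (ptr (𝒜 j) (A T ∩ 𝒜 j) (R j)) := by
      intro T hT
      rw [ptr_smul, master T (Finset.mem_filter.mp hT).2 j]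
    rw [Finset.sum_congr rfl hstep]
    have hg : ∀ T : Finset (Fin k), j ∉ T →
        liftM (Finset.inter_subset_right : A (insert j T) ∩ 𝒜 j ⊆ 𝒜 j)
            (ptr (𝒜 j) (A (insert j T) ∩ 𝒜 j) (R j))
          = liftM (Finset.inter_subset_right : A T ∩ 𝒜 j ⊆ 𝒜 j)
              (ptr (𝒜 j) (A T ∩ 𝒜 j) (R j)) := by
      intro T hjT
      refine lift_ptr_congr ?_ _ _ (R j)
      rw [hA]
      simp only [Finset.inf_insert, Finset.inf_eq_inter]
      ext x
      simp only [Finset.mem_inter]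
      tauto
    rw [pairing j (fun T => liftM (Finset.inter_subset_right : A T ∩ 𝒜 j ⊆ 𝒜 j)
        (ptr (𝒜 j) (A T ∩ 𝒜 j) (R j))) hg]
    refine lift_ptr_self_of_eq ?_ _ (R j)
    rw [hA]
    simp only [Finset.inf_singleton, Finset.inter_self]
  set Rf := (2⁻¹ : ℂ) • (Rg + Rgᴴ) with hRf
  have hmarg : ∀ i : Fin k, ptr Finset.univ (𝒜 i) Rf = R i := by
    intro i
    rw [hRf, ptr_smul, ptr_add, ptr_conjTranspose, hmargRg i, (hHerm i).eq]
    rw [← two_smul ℂ (R i), smul_smul, inv_mul_cancel₀ (two_ne_zero), one_smul]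
  refine ⟨Rf, ?_, ?_, hmarg⟩
  · show Rfᴴ = Rf
    rw [hRf, Matrix.conjTranspose_smul, Matrix.conjTranspose_add,
      Matrix.conjTranspose_conjTranspose, add_comm]
    congr 1
    simp
  · have := ptr_trace (Finset.subset_univ (𝒜 j₀)) Rf
    rw [hmarg j₀] at this
    rw [← this, hTrace j₀]
end

section
/- Let a, b ≥ 1 and let ψ ∈ ℂ^a ⊗ ℂ^b be a unit vector. Then there exist finitely many unit vectors u_j ∈ ℂ^a and v_j ∈ ℂ^b and real numbers η_j with Σ_j η_j = 1 such that the rank-one projection |ψ⟩⟨ψ| equals Σ_j η_j (|u_j⟩⟨u_j| ⊗ |v_j⟩⟨v_j|), where ⊗ denotes the tensor (Kronecker) product of operators. -/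
/-!
Polarization writes every matrix unit `|x⟩⟨y|` as a complex combination of four rank-one
matrices `|w⟩⟨w|`, so the Kronecker products `|u⟩⟨u| ⊗ |v⟩⟨v|` span all matrices on
`ℂ^a ⊗ ℂ^b` over `ℂ`. A Hermitian matrix is the real part of any such expansion, which only
replaces the coefficients by their real parts, and rescaling `u` and `v` to unit vectors keeps
the coefficients real. Taking traces, the coefficients of `|ψ⟩⟨ψ|` then sum to `tr |ψ⟩⟨ψ| = 1`.
-/

open Matrix Complex Submodule
open scoped Kronecker ComplexConjugate

section

variable {ι κ : Type*}

theorem vecMulVec_star_polarization (u v : ι → ℂ) :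
    vecMulVec (u + v) (star (u + v)) - vecMulVec (u - v) (star (u - v)) +
        I • vecMulVec (u + I • v) (star (u + I • v)) -
        I • vecMulVec (u - I • v) (star (u - I • v)) =
      (4 : ℂ) • vecMulVec u (star v) := by
  ext i j
  simp only [Matrix.sub_apply, Matrix.add_apply, Matrix.smul_apply, vecMulVec_apply, Pi.add_apply,
    Pi.sub_apply, Pi.smul_apply, Pi.star_apply, star_add, star_sub, star_smul, smul_eq_mul,
    RCLike.star_def, conj_I]
  linear_combination (2 * v i * conj (u j) - 2 * u i * conj (v j)) * I_sq

theorem vecMulVec_star_mem_span_vecMulVec_self_star (u v : ι → ℂ) :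
    vecMulVec u (star v) ∈ span ℂ (Set.range fun w : ι → ℂ => vecMulVec w (star w)) := by
  have hmem (w : ι → ℂ) :
      vecMulVec w (star w) ∈ span ℂ (Set.range fun w : ι → ℂ => vecMulVec w (star w)) :=
    subset_span ⟨w, rfl⟩
  rw [← inv_smul_smul₀ (by norm_num : (4 : ℂ) ≠ 0) (vecMulVec u (star v)),
    ← vecMulVec_star_polarization]
  exact smul_mem _ _ <| sub_mem (add_mem (sub_mem (hmem _) (hmem _)) (smul_mem _ _ (hmem _)))
    (smul_mem _ _ (hmem _))

theorem span_vecMulVec_self_star_eq_top [Fintype ι] [DecidableEq ι] :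
    span ℂ (Set.range fun w : ι → ℂ => vecMulVec w (star w)) = ⊤ := by
  refine eq_top_iff.mpr fun M _ => ?_
  rw [matrix_eq_sum_single M]
  refine sum_mem fun x _ => sum_mem fun y _ => ?_
  rw [← mul_one (M x y), ← smul_eq_mul, ← smul_single, single_eq_single_vecMulVec_single]
  simpa using smul_mem _ (M x y)
    (vecMulVec_star_mem_span_vecMulVec_self_star (Pi.single x 1) (Pi.single y 1))

theorem span_image2_kronecker_eq_top {R l m n p : Type*} [CommSemiring R]
    [Fintype l] [Fintype m] [Fintype n] [Fintype p]
    [DecidableEq l] [DecidableEq m] [DecidableEq n] [DecidableEq p]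
    {s : Set (Matrix l m R)} {t : Set (Matrix n p R)} (hs : span R s = ⊤) (ht : span R t = ⊤) :
    span R (Set.image2 (· ⊗ₖ ·) s t) = ⊤ := by
  have hmap : map₂ (kroneckerBilinear (R := R)) (span R s) (span R t) = ⊤ := by
    rw [hs, ht]
    refine eq_top_iff.mpr fun M _ => ?_
    rw [matrix_eq_sum_single M]
    refine sum_mem fun x _ => sum_mem fun y _ => ?_
    rw [← mul_one (M x y), ← single_kronecker_single]
    exact apply_mem_map₂ _ mem_top mem_top
  rwa [map₂_span_span] at hmap

theorem mem_span_real_of_isSelfAdjoint {E : Type*} [AddCommGroup E] [Module ℂ E] [Module ℝ E]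
    [IsScalarTower ℝ ℂ E] [StarAddMonoid E] [StarModule ℂ E] {s : Set E}
    (hs : ∀ y ∈ s, IsSelfAdjoint y) {x : E} (hx : x ∈ span ℂ s) (hxsa : IsSelfAdjoint x) :
    x ∈ span ℝ s := by
  obtain ⟨n, c, g, rfl⟩ := mem_span_set'.mp hx
  have hconj : ∑ i, c i • (g i : E) = ∑ i, conj (c i) • (g i : E) := by
    conv_lhs => rw [← hxsa.star_eq]
    simp [star_sum, star_smul, (hs _ (g _).2).star_eq]
  have hre (i : Fin n) :
      (c i).re • (g i : E) = (2 : ℂ)⁻¹ • (c i • (g i : E) + conj (c i) • (g i : E)) := by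
    rw [← add_smul, smul_smul, ← div_eq_inv_mul, ← re_eq_add_conj]
    exact RCLike.real_smul_eq_coe_smul _ _
  have hsum : ∑ i, c i • (g i : E) = ∑ i, (c i).re • (g i : E) := by
    simp_rw [hre, ← Finset.smul_sum, Finset.sum_add_distrib, ← hconj, ← two_smul ℂ, smul_smul,
      inv_mul_cancel₀ (two_ne_zero (α := ℂ)), one_smul]
  rw [hsum]
  exact sum_mem fun i _ => smul_mem _ _ (subset_span (g i).2)

theorem isHermitian_vecMulVec_self_star (w : ι → ℂ) : (vecMulVec w (star w)).IsHermitian := by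
  rw [IsHermitian, conjTranspose_vecMulVec, star_star]

theorem trace_vecMulVec_self_star [Fintype ι] (w : ι → ℂ) :
    trace (vecMulVec w (star w)) = ((∑ i, ‖w i‖ ^ 2 : ℝ) : ℂ) := by
  simp [dotProduct, mul_conj, normSq_eq_norm_sq]

def pureStates (ι : Type*) [Fintype ι] : Set (Matrix ι ι ℂ) :=
  {P | ∃ u : ι → ℂ, ∑ i, ‖u i‖ ^ 2 = 1 ∧ vecMulVec u (star u) = P}

def productPureStates (ι κ : Type*) [Fintype ι] [Fintype κ] : Set (Matrix (ι × κ) (ι × κ) ℂ) :=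
  Set.image2 (· ⊗ₖ ·) (pureStates ι) (pureStates κ)

theorem vecMulVec_self_star_mem_span_pureStates [Fintype ι] (w : ι → ℂ) :
    vecMulVec w (star w) ∈ span ℝ (pureStates ι) := by
  by_cases hw : w = 0
  · simp [hw]
  set N := ∑ i, ‖w i‖ ^ 2
  have hN : 0 < N := by
    obtain ⟨i, hi⟩ := Function.ne_iff.mp hw
    exact Finset.sum_pos' (fun i _ => by positivity)
      ⟨i, Finset.mem_univ i, pow_pos (norm_pos_iff.mpr hi) 2⟩
  have hsqrt : (√N)⁻¹ ^ 2 = N⁻¹ := by rw [inv_pow, Real.sq_sqrt hN.le]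
  set u := (√N)⁻¹ • w
  have hu : ∑ i, ‖u i‖ ^ 2 = 1 := by
    calc ∑ i, ‖u i‖ ^ 2 = ∑ i, (√N)⁻¹ ^ 2 * ‖w i‖ ^ 2 := by
          simp only [u, Pi.smul_apply, norm_smul, Real.norm_eq_abs, mul_pow, sq_abs]
      _ = 1 := by rw [← Finset.mul_sum, hsqrt, inv_mul_cancel₀ hN.ne']
  have hwu : vecMulVec w (star w) = N • vecMulVec u (star u) := by
    rw [star_smul, star_trivial (√N)⁻¹, smul_vecMulVec, vecMulVec_smul, smul_smul, smul_smul,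
      mul_assoc, ← sq, hsqrt, mul_inv_cancel₀ hN.ne', one_smul]
  rw [hwu]
  exact smul_mem _ _ (subset_span ⟨u, hu, rfl⟩)

theorem Matrix.IsHermitian.mem_span_productPureStates [Fintype ι] [DecidableEq ι]
    [Fintype κ] [DecidableEq κ] {M : Matrix (ι × κ) (ι × κ) ℂ} (hM : M.IsHermitian) :
    M ∈ span ℝ (productPureStates ι κ) := by
  set T := Set.image2 (· ⊗ₖ ·) (Set.range fun u : ι → ℂ => vecMulVec u (star u))
    (Set.range fun v : κ → ℂ => vecMulVec v (star v))
  have hT : ∀ A ∈ T, IsSelfAdjoint A := by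
    rintro _ ⟨_, ⟨u, rfl⟩, _, ⟨v, rfl⟩, rfl⟩
    rw [IsSelfAdjoint, star_eq_conjTranspose, conjTranspose_kronecker,
      isHermitian_vecMulVec_self_star u, isHermitian_vecMulVec_self_star v]
  have hMT : M ∈ span ℝ T := by
    refine mem_span_real_of_isSelfAdjoint hT ?_ hM
    rw [span_image2_kronecker_eq_top span_vecMulVec_self_star_eq_top
      span_vecMulVec_self_star_eq_top]
    exact mem_top
  refine span_le.mpr ?_ hMT
  rintro _ ⟨_, ⟨u, rfl⟩, _, ⟨v, rfl⟩, rfl⟩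
  have h := apply_mem_map₂ (kroneckerBilinear (R := ℝ))
    (vecMulVec_self_star_mem_span_pureStates u) (vecMulVec_self_star_mem_span_pureStates v)
  rwa [map₂_span_span] at h

end

theorem pure_state_quasiProb_product_decomposition_general
    (a b : ℕ)
    (ψ : Fin a × Fin b → ℂ)
    (hψ : ∑ x, ‖ψ x‖ ^ 2 = 1) :
    ∃ (k : ℕ) (u : Fin k → Fin a → ℂ) (v : Fin k → Fin b → ℂ) (η : Fin k → ℝ),
      (∀ j, ∑ i, ‖u j i‖ ^ 2 = 1) ∧
      (∀ j, ∑ i, ‖v j i‖ ^ 2 = 1) ∧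
      (∑ j, η j = 1) ∧
      vecMulVec ψ (star ψ) =
        ∑ j, (η j : ℂ) •
          (vecMulVec (u j) (star (u j)) ⊗ₖ vecMulVec (v j) (star (v j))) := by
  obtain ⟨k, η, P, hP⟩ :=
    mem_span_set'.mp (isHermitian_vecMulVec_self_star ψ).mem_span_productPureStates
  choose A hA B hB hAB using fun j => (P j).2
  choose u hu hAu using hA
  choose v hv hBv using hB
  have hdecomp : vecMulVec ψ (star ψ) = ∑ j, η j •
      (vecMulVec (u j) (star (u j)) ⊗ₖ vecMulVec (v j) (star (v j))) := by
    simp only [← hP, hAu, hBv, hAB]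
  refine ⟨k, u, v, η, hu, hv, ?_, ?_⟩
  · have htrace := congrArg trace hdecomp
    simp only [trace_sum, trace_smul, trace_kronecker, trace_vecMulVec_self_star, hψ, hu, hv,
      ofReal_one, mul_one, real_smul] at htrace
    exact_mod_cast htrace.symm
  · simp only [hdecomp, Complex.coe_smul]

/-- every bipartite pure-state projection `|ψ⟩⟨ψ|` is a
quasi-probabilistic mixture (real coefficients summing to 1) of tensor
products of pure-state projections. -/
theorem pure_state_quasiProb_product_decomposition
    (a b : ℕ) (ha : 1 ≤ a) (hb : 1 ≤ b)
    (ψ : Fin a × Fin b → ℂ)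
    (hψ : ∑ x, ‖ψ x‖ ^ 2 = 1) :
    ∃ (k : ℕ) (u : Fin k → Fin a → ℂ) (v : Fin k → Fin b → ℂ) (η : Fin k → ℝ),
      (∀ j, ∑ i, ‖u j i‖ ^ 2 = 1) ∧
      (∀ j, ∑ i, ‖v j i‖ ^ 2 = 1) ∧
      (∑ j, η j = 1) ∧
      vecMulVec ψ (star ψ) =
        ∑ j, (η j : ℂ) •
          (vecMulVec (u j) (star (u j)) ⊗ₖ vecMulVec (v j) (star (v j))) :=
  pure_state_quasiProb_product_decomposition_general a b ψ hψ
end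

section
/- Let n ≥ 1, let d₁, …, dₙ ≥ 1, and let R be a Hermitian operator on ℂ^{d₁} ⊗ ⋯ ⊗ ℂ^{dₙ} with trace 1. Then there exist finitely many families of unit vectors u_{j,i} ∈ ℂ^{d_i} and real numbers p_j with Σ_j p_j = 1 such that R = Σ_j p_j (|u_{j,1}⟩⟨u_{j,1}| ⊗ ⋯ ⊗ |u_{j,n}⟩⟨u_{j,n}|). -/
/-!
Expand `R` in matrix units, `R = ∑ R f g • |f⟩⟨g|`, and factor each unit as
`|f⟩⟨g| = ⊗ᵢ |f i⟩⟨g i|`. On a single factor, polarization writes `|a⟩⟨b|` as a complex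
combination of four pure states, so multiplying out the tensor product expresses `R` as a
complex combination of pure product states. These are Hermitian, so since `R` is Hermitian the
coefficients may be replaced by their real parts; taking traces shows they sum to `tr R = 1`.
-/

open Matrix Complex

namespace Matrix

section PiKronecker

variable {ι : Type*} [Fintype ι] {m n : ι → Type*} {α : Type*}

def piKronecker [CommMonoid α] (A : ∀ i, Matrix (m i) (n i) α) :
    Matrix (∀ i, m i) (∀ i, n i) α :=
  of fun f g => ∏ i, A i (f i) (g i)

theorem piKronecker_single [CommMonoidWithZero α] [∀ i, DecidableEq (m i)]
    [∀ i, DecidableEq (n i)] (f : ∀ i, m i) (g : ∀ i, n i) :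
    piKronecker (fun i => single (f i) (g i) (1 : α)) = single f g 1 := by
  ext x y
  simp [piKronecker, single_apply, Fintype.prod_boole, funext_iff, forall_and]

theorem piKronecker_sum_smul [CommSemiring α] [DecidableEq ι] {σ : ι → Type*}
    [∀ i, Fintype (σ i)] (c : ∀ i, σ i → α) (A : ∀ i, σ i → Matrix (m i) (n i) α) :
    piKronecker (fun i => ∑ s, c i s • A i s) =
      ∑ τ : ∀ i, σ i, (∏ i, c i (τ i)) • piKronecker fun i => A i (τ i) := by
  ext x y
  simp [piKronecker, sum_apply, Finset.prod_univ_sum, Finset.prod_mul_distrib]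

theorem conjTranspose_piKronecker [CommMonoid α] [StarMul α]
    (A : ∀ i, Matrix (m i) (n i) α) :
    (piKronecker A)ᴴ = piKronecker fun i => (A i)ᴴ := by
  ext x y
  simp [piKronecker, star_prod]

theorem IsHermitian.piKronecker [CommMonoid α] [StarMul α] {A : ∀ i, Matrix (m i) (m i) α}
    (hA : ∀ i, (A i).IsHermitian) : (piKronecker A).IsHermitian := by
  rw [IsHermitian, conjTranspose_piKronecker]
  exact congrArg _ (funext hA)

theorem trace_piKronecker [CommSemiring α] [DecidableEq ι] [∀ i, Fintype (m i)]
    (A : ∀ i, Matrix (m i) (m i) α) : trace (piKronecker A) = ∏ i, trace (A i) := by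
  simp [trace, piKronecker, Finset.prod_univ_sum]

end PiKronecker

section VecMulVec

variable {κ : Type*} {α : Type*}

theorem isHermitian_vecMulVec_star [Mul α] [StarMul α] (v : κ → α) :
    (vecMulVec v (star v)).IsHermitian := by
  rw [IsHermitian, conjTranspose_vecMulVec, star_star]

theorem trace_vecMulVec_star [Fintype κ] (v : κ → ℂ) :
    (vecMulVec v (star v)).trace = ((∑ t, ‖v t‖ ^ 2 : ℝ) : ℂ) := by
  simp [dotProduct, mul_conj, normSq_eq_norm_sq]

theorem vecMulVec_pi_single [DecidableEq κ] [Semiring α] (a b : κ) (z w : α) :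
    vecMulVec (Pi.single a z) (Pi.single b w) = (z * w) • (single a b 1 : Matrix κ κ α) := by
  ext i j
  simp only [vecMulVec_apply, Pi.single_apply, smul_apply, single_apply]
  split_ifs <;> simp_all

theorem vecMulVec_pi_single_add_pi_single_star [DecidableEq κ] [Semiring α] [StarRing α]
    (a b : κ) (z w : α) :
    vecMulVec (Pi.single a z + Pi.single b w) (star (Pi.single a z + Pi.single b w)) =
      (z * star z) • (single a a 1 : Matrix κ κ α) + (z * star w) • single a b 1 +
        (w * star z) • single b a 1 + (w * star w) • single b b 1 := by
  simp only [star_add, ← Pi.single_star, add_vecMulVec, vecMulVec_add, vecMulVec_pi_single]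
  abel

end VecMulVec

end Matrix

section PiSingle

variable {κ : Type*} [Fintype κ] [DecidableEq κ] {E : Type*} [SeminormedAddCommGroup E]

theorem sum_norm_sq_pi_single (a : κ) (z : E) :
    ∑ t, ‖(Pi.single a z : κ → E) t‖ ^ 2 = ‖z‖ ^ 2 := by
  rw [Fintype.sum_eq_single a fun t ht => by simp [ht]]
  simp

theorem sum_norm_sq_pi_single_add_pi_single {a b : κ} (hab : a ≠ b) (z w : E) :
    ∑ t, ‖(Pi.single a z : κ → E) t + (Pi.single b w : κ → E) t‖ ^ 2 = ‖z‖ ^ 2 + ‖w‖ ^ 2 := by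
  rw [Fintype.sum_eq_add a b hab]
  · simp [hab, hab.symm]
  · rintro t ⟨hta, htb⟩
    simp [hta, htb]

end PiSingle

/-- For `a ≠ b`, with `x = (eₐ + e_b)/√2` and `y = (eₐ + i e_b)/√2`,
`|a⟩⟨b| = |x⟩⟨x| + i |y⟩⟨y| - (1 + i)/2 (|a⟩⟨a| + |b⟩⟨b|)`. -/
theorem Matrix.exists_single_eq_sum_smul_vecMulVec_star {κ : Type*} [Fintype κ] [DecidableEq κ]
    (a b : κ) :
    ∃ (c : Fin 4 → ℂ) (v : Fin 4 → κ → ℂ), (∀ s, ∑ t, ‖v s t‖ ^ 2 = 1) ∧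
      single a b 1 = ∑ s, c s • vecMulVec (v s) (star (v s)) := by
  rcases eq_or_ne a b with rfl | hab
  · refine ⟨![1, 0, 0, 0], fun _ => Pi.single a 1, fun _ => by simp [sum_norm_sq_pi_single], ?_⟩
    simp [Fin.sum_univ_four, vecMulVec_pi_single]
  obtain ⟨r, hr, hr_star, hr_norm⟩ : ∃ r : ℂ, r * r = 2⁻¹ ∧ star r = r ∧ ‖r‖ ^ 2 = 2⁻¹ :=
    ⟨(((√2)⁻¹ : ℝ) : ℂ), by simp [← ofReal_mul, ← mul_inv], conj_ofReal _, by simp⟩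
  have hI : star I = -I := conj_I
  refine ⟨![-(1 + I) / 2, -(1 + I) / 2, 1, I],
    ![Pi.single a 1, Pi.single b 1, Pi.single a r + Pi.single b r,
      Pi.single a r + Pi.single b (r * I)], ?_, ?_⟩
  · intro s
    fin_cases s <;>
      norm_num [sum_norm_sq_pi_single, sum_norm_sq_pi_single_add_pi_single hab, hr_norm]
  · simp only [Fin.sum_univ_four, Matrix.cons_val, vecMulVec_pi_single_add_pi_single_star,
      ← Pi.single_star, vecMulVec_pi_single, star_mul, star_one, hr_star, hI]
    match_scalars <;> grind [I_sq]

theorem Matrix.exists_eq_sum_smul_piKronecker_vecMulVec_star {ι : Type*} [Fintype ι]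
    [DecidableEq ι] {κ : ι → Type*} [∀ i, Fintype (κ i)] [∀ i, DecidableEq (κ i)]
    (R : Matrix (∀ i, κ i) (∀ i, κ i) ℂ) :
    ∃ (k : ℕ) (c : Fin k → ℂ) (u : Fin k → ∀ i, κ i → ℂ), (∀ j i, ∑ t, ‖u j i t‖ ^ 2 = 1) ∧
      R = ∑ j, c j • piKronecker fun i => vecMulVec (u j i) (star (u j i)) := by
  choose c v hv hsingle using fun i => exists_single_eq_sum_smul_vecMulVec_star (κ := κ i)
  let q : (∀ i, κ i) × (∀ i, κ i) × (ι → Fin 4) → ℂ := fun j =>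
    R j.1 j.2.1 * ∏ i, c i (j.1 i) (j.2.1 i) (j.2.2 i)
  let w : (∀ i, κ i) × (∀ i, κ i) × (ι → Fin 4) → ∀ i, κ i → ℂ := fun j i =>
    v i (j.1 i) (j.2.1 i) (j.2.2 i)
  have hR : R = ∑ j, q j • piKronecker fun i => vecMulVec (w j i) (star (w j i)) :=
    calc R = ∑ f, ∑ g, single f g (R f g) := matrix_eq_sum_single R
      _ = ∑ f, ∑ g, R f g • ∑ τ : ι → Fin 4, (∏ i, c i (f i) (g i) (τ i)) •
            piKronecker fun i => vecMulVec (v i (f i) (g i) (τ i)) (star (v i (f i) (g i) (τ i))) := by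
        refine Finset.sum_congr rfl fun f _ => Finset.sum_congr rfl fun g _ => ?_
        rw [← piKronecker_sum_smul (fun i => c i (f i) (g i))
            (fun i s => vecMulVec (v i (f i) (g i) s) (star (v i (f i) (g i) s))),
          ← funext fun i => hsingle i (f i) (g i), piKronecker_single, smul_single, smul_eq_mul,
          mul_one]
      _ = _ := by simp only [Fintype.sum_prod_type, Finset.smul_sum, smul_smul, q, w]
  let e := Fintype.equivFin ((∀ i, κ i) × (∀ i, κ i) × (ι → Fin 4))
  refine ⟨_, q ∘ e.symm, w ∘ e.symm, fun j i => hv _ _ _ _, ?_⟩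
  rw [hR, ← e.symm.sum_comp]
  rfl

theorem IsSelfAdjoint.eq_sum_re_smul {E J : Type*} [AddCommGroup E] [Module ℂ E]
    [StarAddMonoid E] [StarModule ℂ E] [Fintype J] {x : E} (hx : IsSelfAdjoint x)
    {c : J → ℂ} {M : J → E} (hM : ∀ j, IsSelfAdjoint (M j)) (h : x = ∑ j, c j • M j) :
    x = ∑ j, ((c j).re : ℂ) • M j := by
  have hstar : x = ∑ j, star (c j) • M j := by
    rw [← hx.star_eq, h, star_sum]
    simp [star_smul, (hM _).star_eq]
  calc x = (2 : ℂ)⁻¹ • (x + x) := by rw [← two_smul ℂ x, smul_smul]; norm_num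
    _ = (2 : ℂ)⁻¹ • (∑ j, c j • M j + ∑ j, star (c j) • M j) := by rw [← h, ← hstar]
    _ = ∑ j, ((c j).re : ℂ) • M j := by
      simp only [re_eq_add_conj, Finset.smul_sum, ← Finset.sum_add_distrib, ← add_smul, smul_smul]
      simp [div_eq_inv_mul]

theorem herm1_quasiProb_product_expansion_general
    (n : ℕ) (d : Fin n → ℕ)
    (R : Matrix (∀ i, Fin (d i)) (∀ i, Fin (d i)) ℂ)
    (hHerm : R.IsHermitian) (hTr : R.trace = 1) :
    ∃ (k : ℕ) (u : Fin k → ∀ i, Fin (d i) → ℂ) (p : Fin k → ℝ),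
      (∀ j i, ∑ t, ‖u j i t‖ ^ 2 = 1) ∧
      (∑ j, p j = 1) ∧
      R = ∑ j, (p j : ℂ) •
          Matrix.of (fun f g : ∀ i, Fin (d i) =>
            ∏ i, u j i (f i) * star (u j i (g i))) := by
  obtain ⟨k, c, u, hu, hR⟩ := exists_eq_sum_smul_piKronecker_vecMulVec_star R
  have hR_re := hHerm.isSelfAdjoint.eq_sum_re_smul
    (fun j => (IsHermitian.piKronecker fun i => isHermitian_vecMulVec_star (u j i)).isSelfAdjoint)
    hR
  refine ⟨k, u, fun j => (c j).re, hu, ?_, hR_re⟩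
  have htrace := congrArg trace hR_re
  simp only [hTr, trace_sum, trace_smul, trace_piKronecker, trace_vecMulVec_star, hu,
    ofReal_one, Finset.prod_const_one, smul_eq_mul, mul_one] at htrace
  exact_mod_cast htrace.symm

/-- corollary of the quasi-probability separable expansion:
every Hermitian trace-one operator on `ℂ^{d₁} ⊗ ⋯ ⊗ ℂ^{dₙ}` is a
quasi-probabilistic mixture of pure space-time product states. -/
theorem herm1_quasiProb_product_expansion
    (n : ℕ) (hn : 1 ≤ n) (d : Fin n → ℕ) (hd : ∀ i, 1 ≤ d i)
    (R : Matrix (∀ i, Fin (d i)) (∀ i, Fin (d i)) ℂ)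
    (hHerm : R.IsHermitian) (hTr : R.trace = 1) :
    ∃ (k : ℕ) (u : Fin k → ∀ i, Fin (d i) → ℂ) (p : Fin k → ℝ),
      (∀ j i, ∑ t, ‖u j i t‖ ^ 2 = 1) ∧
      (∑ j, p j = 1) ∧
      R = ∑ j, (p j : ℂ) •
          Matrix.of (fun f g : ∀ i, Fin (d i) =>
            ∏ i, u j i (f i) * star (u j i (g i))) :=
  herm1_quasiProb_product_expansion_general n d R hHerm hTr
end

section
/- Let d_A, d_B ≥ 1, let W be a Hermitian trace-one operator on ℂ^{d_A} ⊗ ℂ^{d_B}, and let n ≥ 3. Then there exists a Hermitian trace-one operator W' on ℂ^{d_A} ⊗ (ℂ^{d_B})^{⊗(n−1)} (with factors labelled A, B₁, …, B_{n−1}) such that for every i ∈ {1, …, n−1}, the partial trace of W' over all factors B_j with j ≠ i equals W (as an operator on the factors A and B_i). -/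
open Matrix Finset

/-- Partial trace of an operator on `ℂ^{d_A} ⊗ (ℂ^{d_B})^{⊗ m}` over all
`B`-factors except the `i`-th, yielding an operator on `ℂ^{d_A} ⊗ ℂ^{d_B}`
(the factors `A` and `B_i`). -/
noncomputable def ptrExcept {dA dB m : ℕ} (i : Fin m)
    (W : Matrix (Fin dA × (Fin m → Fin dB)) (Fin dA × (Fin m → Fin dB)) ℂ) :
    Matrix (Fin dA × Fin dB) (Fin dA × Fin dB) ℂ :=
  fun p q => ∑ h : {j : Fin m // j ≠ i} → Fin dB,
    W (p.1, fun j => if hj : j = i then p.2 else h ⟨j, hj⟩)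
      (q.1, fun j => if hj : j = i then q.2 else h ⟨j, hj⟩)


/-- normalized delta -/
noncomputable def eMat (dB : ℕ) (x y : Fin dB) : ℂ :=
  if x = y then ((dB : ℂ))⁻¹ else 0

lemma eMat_symm (dB : ℕ) (x y : Fin dB) : eMat dB x y = eMat dB y x := by
  simp [eMat, eq_comm]

lemma star_eMat (dB : ℕ) (x y : Fin dB) : star (eMat dB x y) = eMat dB x y := by
  unfold eMat; split <;> simp

lemma sum_eMat_diag {dB : ℕ} (hdB : 1 ≤ dB) : ∑ b : Fin dB, eMat dB b b = 1 := by
  have h0 : ((dB : ℂ)) ≠ 0 := Nat.cast_ne_zero.mpr (by omega)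
  simp [eMat, Finset.sum_const, Finset.card_univ, nsmul_eq_mul,
    mul_inv_cancel₀ h0]

lemma sum_pi_prod {α : Type*} [Fintype α] [DecidableEq α] {dB : ℕ}
    (f : α → Fin dB → ℂ) :
    ∑ h : α → Fin dB, ∏ a, f a (h a) = ∏ a, ∑ b, f a b :=
  (Fintype.prod_sum f).symm

/-- The symmetric extension: `Σ_k W_{AB_k} ⊗ u^{⊗(m-1)} − (m−1)·W_A ⊗ u^{⊗m}`. -/
noncomputable def extW (dA dB m : ℕ)
    (W : Matrix (Fin dA × Fin dB) (Fin dA × Fin dB) ℂ) :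
    Matrix (Fin dA × (Fin m → Fin dB)) (Fin dA × (Fin m → Fin dB)) ℂ :=
  fun p q =>
    (∑ k : Fin m, W (p.1, p.2 k) (q.1, q.2 k) *
        ∏ j ∈ Finset.univ.erase k, eMat dB (p.2 j) (q.2 j))
    - ((m : ℂ) - 1) * (∑ b : Fin dB, W (p.1, b) (q.1, b)) *
        ∏ j : Fin m, eMat dB (p.2 j) (q.2 j)

lemma herm_extW {dA dB m : ℕ} (W : Matrix (Fin dA × Fin dB) (Fin dA × Fin dB) ℂ)
    (hH : W.IsHermitian) : (extW dA dB m W).IsHermitian := by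
  show (extW dA dB m W)ᴴ = extW dA dB m W
  ext p q
  rw [conjTranspose_apply]
  unfold extW
  rw [star_sub, star_sum, star_mul']
  congr 1
  · apply Finset.sum_congr rfl
    intro k _
    rw [star_mul']
    congr 1
    · exact hH.apply _ _
    · rw [star_prod]
      exact Finset.prod_congr rfl fun j _ => by
        rw [star_eMat, eMat_symm]
  · congr 1
    · rw [star_mul', star_sum]
      congr 1
      · simp
      · exact Finset.sum_congr rfl fun b _ => hH.apply _ _
    · rw [star_prod]
      exact Finset.prod_congr rfl fun j _ => by rw [star_eMat, eMat_symm]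

lemma trace_extW {dA dB m : ℕ} (hdB : 1 ≤ dB)
    (W : Matrix (Fin dA × Fin dB) (Fin dA × Fin dB) ℂ) (hTr : W.trace = 1) :
    (extW dA dB m W).trace = 1 := by
  classical
  have htrW : ∑ a : Fin dA, ∑ b : Fin dB, W (a, b) (a, b) = 1 := by
    simpa [Matrix.trace, Matrix.diag, Fintype.sum_prod_type] using hTr
  unfold Matrix.trace Matrix.diag extW
  rw [Fintype.sum_prod_type]
  have key : ∀ a : Fin dA,
      ∑ bv : Fin m → Fin dB,
        ((∑ k : Fin m, W (a, bv k) (a, bv k) *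
            ∏ j ∈ Finset.univ.erase k, eMat dB (bv j) (bv j))
          - ((m : ℂ) - 1) * (∑ b : Fin dB, W (a, b) (a, b)) *
            ∏ j : Fin m, eMat dB (bv j) (bv j))
        = ∑ b : Fin dB, W (a, b) (a, b) := by
    intro a
    rw [Finset.sum_sub_distrib]
    have h1 : ∑ bv : Fin m → Fin dB, ∑ k : Fin m, W (a, bv k) (a, bv k) *
        ∏ j ∈ Finset.univ.erase k, eMat dB (bv j) (bv j)
        = (m : ℂ) * ∑ b : Fin dB, W (a, b) (a, b) := by
      rw [Finset.sum_comm]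
      have hk : ∀ k : Fin m, ∑ bv : Fin m → Fin dB, W (a, bv k) (a, bv k) *
          ∏ j ∈ Finset.univ.erase k, eMat dB (bv j) (bv j)
          = ∑ b : Fin dB, W (a, b) (a, b) := by
        intro k
        have : ∀ bv : Fin m → Fin dB, W (a, bv k) (a, bv k) *
            ∏ j ∈ Finset.univ.erase k, eMat dB (bv j) (bv j)
            = ∏ j : Fin m, (fun j b => if j = k then W (a, b) (a, b)
                else eMat dB b b) j (bv j) := by
          intro bv
          rw [← Finset.mul_prod_erase Finset.univ _ (Finset.mem_univ k)]
          congr 1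
          · simp
          · exact Finset.prod_congr rfl fun j hj => by
              simp [(Finset.mem_erase.mp hj).1]
        have hs : ∑ bv : Fin m → Fin dB, ∏ j : Fin m,
            (fun (j : Fin m) (b : Fin dB) => if j = k then W (a, b) (a, b)
              else eMat dB b b) j (bv j)
            = ∏ j : Fin m, ∑ b : Fin dB, if j = k then W (a, b) (a, b)
              else eMat dB b b :=
          sum_pi_prod (fun (j : Fin m) (b : Fin dB) =>
            if j = k then W (a, b) (a, b) else eMat dB b b)
        rw [Finset.sum_congr rfl fun bv _ => this bv, hs]
        have : ∀ j : Fin m, (∑ b : Fin dB, if j = k then W (a, b) (a, b)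
            else eMat dB b b) = if j = k then ∑ b : Fin dB, W (a, b) (a, b) else 1 := by
          intro j
          by_cases hj : j = k <;> simp [hj, sum_eMat_diag hdB]
        rw [Finset.prod_congr rfl fun j _ => this j, Finset.prod_ite_eq' Finset.univ k]
        simp
      rw [Finset.sum_congr rfl fun k _ => hk k, Finset.sum_const, Finset.card_univ]
      simp [nsmul_eq_mul]
    have h2 : ∑ bv : Fin m → Fin dB, ((m : ℂ) - 1) *
        (∑ b : Fin dB, W (a, b) (a, b)) * ∏ j : Fin m, eMat dB (bv j) (bv j)
        = ((m : ℂ) - 1) * ∑ b : Fin dB, W (a, b) (a, b) := by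
      rw [← Finset.mul_sum]
      have : ∑ bv : Fin m → Fin dB, ∏ j : Fin m, eMat dB (bv j) (bv j) = 1 := by
        have hs : ∑ bv : Fin m → Fin dB, ∏ j : Fin m, eMat dB (bv j) (bv j)
            = ∏ _j : Fin m, ∑ b : Fin dB, eMat dB b b :=
          sum_pi_prod (fun (_ : Fin m) (b : Fin dB) => eMat dB b b)
        rw [hs]
        simp [sum_eMat_diag hdB]
      rw [this, mul_one]
    rw [h1, h2]; ring
  rw [Finset.sum_congr rfl fun a _ => key a]
  exact htrW

lemma prod_erase_subtype {m : ℕ} (i : Fin m) (g : Fin m → ℂ)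
    (G : {j : Fin m // j ≠ i} → ℂ) (hgG : ∀ j (hj : j ≠ i), g j = G ⟨j, hj⟩) :
    ∏ j ∈ Finset.univ.erase i, g j = ∏ j : {j : Fin m // j ≠ i}, G j := by
  rw [Finset.prod_subtype (p := fun j => j ≠ i) (Finset.univ.erase i) (by simp) g]
  exact Finset.prod_congr rfl fun j _ => by rw [hgG j.1 j.2]

lemma prod_erase_erase_subtype {m : ℕ} {i k : Fin m} (hk : k ≠ i) (g : Fin m → ℂ)
    (G : {j : Fin m // j ≠ i} → ℂ) (hgG : ∀ j (hj : j ≠ i), g j = G ⟨j, hj⟩) :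
    ∏ j ∈ (Finset.univ.erase k).erase i, g j
      = ∏ j ∈ (Finset.univ : Finset {j : Fin m // j ≠ i}).erase ⟨k, hk⟩, G j := by
  apply Finset.prod_bij (fun j hj => (⟨j, (Finset.mem_erase.mp hj).1⟩ : {j : Fin m // j ≠ i}))
  · intro a ha
    have h1 := Finset.mem_erase.mp ha
    have h2 := Finset.mem_erase.mp h1.2
    simp only [Finset.mem_erase, Finset.mem_univ, and_true]
    exact fun hcon => h2.1 (congrArg Subtype.val hcon)
  · intro a₁ ha₁ a₂ ha₂ hh
    exact congrArg Subtype.val hh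
  · intro b hb
    have hb' := Finset.mem_erase.mp hb
    refine ⟨b.1, ?_, ?_⟩
    · refine Finset.mem_erase.mpr ⟨b.2, Finset.mem_erase.mpr ⟨?_, Finset.mem_univ _⟩⟩
      exact fun hcon => hb'.1 (Subtype.ext hcon)
    · simp
  · intro a ha
    exact hgG a (Finset.mem_erase.mp ha).1

lemma ptr_extW {dA dB m : ℕ} (hdB : 1 ≤ dB)
    (W : Matrix (Fin dA × Fin dB) (Fin dA × Fin dB) ℂ) (i : Fin m) :
    ptrExcept i (extW dA dB m W) = W := by
  classical
  ext p q
  obtain ⟨a, x⟩ := p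
  obtain ⟨c, y⟩ := q
  show ∑ h : {j : Fin m // j ≠ i} → Fin dB,
      extW dA dB m W (a, fun j => if hj : j = i then x else h ⟨j, hj⟩)
        (c, fun j => if hj : j = i then y else h ⟨j, hj⟩) = W (a, x) (c, y)
  unfold extW
  rw [Finset.sum_sub_distrib]
  set WA : ℂ := ∑ b : Fin dB, W (a, b) (c, b) with hWA
  have base : ∀ h : {j : Fin m // j ≠ i} → Fin dB,
      ∏ j ∈ Finset.univ.erase i,
        eMat dB (if hj : j = i then x else h ⟨j, hj⟩)
          (if hj : j = i then y else h ⟨j, hj⟩)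
      = ∏ j : {j : Fin m // j ≠ i}, eMat dB (h j) (h j) := by
    intro h
    apply prod_erase_subtype
    intro j hj
    simp [hj]
  have sum1 : ∑ h : {j : Fin m // j ≠ i} → Fin dB,
      ∏ j : {j : Fin m // j ≠ i}, eMat dB (h j) (h j) = 1 := by
    have hs : ∑ h : {j : Fin m // j ≠ i} → Fin dB,
        ∏ j : {j : Fin m // j ≠ i}, eMat dB (h j) (h j)
        = ∏ _j : {j : Fin m // j ≠ i}, ∑ b : Fin dB, eMat dB b b :=
      sum_pi_prod (fun (_ : {j : Fin m // j ≠ i}) (b : Fin dB) => eMat dB b b)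
    rw [hs]
    simp [sum_eMat_diag hdB]
  -- second (subtracted) part
  have h2 : ∑ h : {j : Fin m // j ≠ i} → Fin dB,
      ((m : ℂ) - 1) * (∑ b : Fin dB, W (a, b) (c, b)) *
        ∏ j : Fin m, eMat dB (if hj : j = i then x else h ⟨j, hj⟩)
          (if hj : j = i then y else h ⟨j, hj⟩)
      = ((m : ℂ) - 1) * WA * eMat dB x y := by
    have hsplit : ∀ h : {j : Fin m // j ≠ i} → Fin dB,
        ∏ j : Fin m, eMat dB (if hj : j = i then x else h ⟨j, hj⟩)
          (if hj : j = i then y else h ⟨j, hj⟩)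
        = eMat dB x y * ∏ j : {j : Fin m // j ≠ i}, eMat dB (h j) (h j) := by
      intro h
      rw [← Finset.mul_prod_erase Finset.univ _ (Finset.mem_univ i), base h]
      simp
    rw [Finset.sum_congr rfl fun h _ => by rw [hsplit h], ← Finset.mul_sum,
      ← Finset.mul_sum, ← hWA, sum1]
    ring
  rw [h2]
  -- first part
  rw [Finset.sum_comm]
  have hki : ∀ k : Fin m, k ≠ i →
      (∑ h : {j : Fin m // j ≠ i} → Fin dB,
        W (a, if hj : k = i then x else h ⟨k, hj⟩)
          (c, if hj : k = i then y else h ⟨k, hj⟩) *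
          ∏ j ∈ Finset.univ.erase k,
            eMat dB (if hj : j = i then x else h ⟨j, hj⟩)
              (if hj : j = i then y else h ⟨j, hj⟩))
      = WA * eMat dB x y := by
    intro k hk
    have key : ∀ h : {j : Fin m // j ≠ i} → Fin dB,
        W (a, if hj : k = i then x else h ⟨k, hj⟩)
          (c, if hj : k = i then y else h ⟨k, hj⟩) *
          ∏ j ∈ Finset.univ.erase k,
            eMat dB (if hj : j = i then x else h ⟨j, hj⟩)
              (if hj : j = i then y else h ⟨j, hj⟩)
        = eMat dB x y * ∏ j : {j : Fin m // j ≠ i},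
            (fun (j : {j : Fin m // j ≠ i}) (b : Fin dB) =>
              if j = ⟨k, hk⟩ then W (a, b) (c, b) else eMat dB b b) j (h j) := by
      intro h
      have hmem : i ∈ Finset.univ.erase k :=
        Finset.mem_erase.mpr ⟨Ne.symm hk, Finset.mem_univ i⟩
      rw [← Finset.mul_prod_erase _ _ hmem]
      have hrest : ∏ j ∈ (Finset.univ.erase k).erase i,
          eMat dB (if hj : j = i then x else h ⟨j, hj⟩)
            (if hj : j = i then y else h ⟨j, hj⟩)
          = ∏ j ∈ (Finset.univ : Finset {j : Fin m // j ≠ i}).erase ⟨k, hk⟩,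
              eMat dB (h j) (h j) := by
        apply prod_erase_erase_subtype hk
        intro j hj
        simp [hj]
      rw [hrest]
      have hfull : ∏ j : {j : Fin m // j ≠ i},
          (fun (j : {j : Fin m // j ≠ i}) (b : Fin dB) =>
            if j = ⟨k, hk⟩ then W (a, b) (c, b) else eMat dB b b) j (h j)
          = W (a, h ⟨k, hk⟩) (c, h ⟨k, hk⟩) *
            ∏ j ∈ (Finset.univ : Finset {j : Fin m // j ≠ i}).erase ⟨k, hk⟩,
              eMat dB (h j) (h j) := by
        rw [← Finset.mul_prod_erase Finset.univ _ (Finset.mem_univ (⟨k, hk⟩ : {j : Fin m // j ≠ i}))]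
        congr 1
        · simp
        · exact Finset.prod_congr rfl fun j hj => by
            simp [(Finset.mem_erase.mp hj).1]
      rw [hfull]
      simp [hk]
      ring
    have hs : ∑ h : {j : Fin m // j ≠ i} → Fin dB,
        ∏ j : {j : Fin m // j ≠ i},
          (fun (j : {j : Fin m // j ≠ i}) (b : Fin dB) =>
            if j = ⟨k, hk⟩ then W (a, b) (c, b) else eMat dB b b) j (h j)
        = ∏ j : {j : Fin m // j ≠ i}, ∑ b : Fin dB,
            if j = ⟨k, hk⟩ then W (a, b) (c, b) else eMat dB b b :=
      sum_pi_prod (fun (j : {j : Fin m // j ≠ i}) (b : Fin dB) =>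
        if j = ⟨k, hk⟩ then W (a, b) (c, b) else eMat dB b b)
    rw [Finset.sum_congr rfl fun h _ => key h, ← Finset.mul_sum, hs]
    have : ∀ j : {j : Fin m // j ≠ i},
        (∑ b : Fin dB, if j = ⟨k, hk⟩ then W (a, b) (c, b) else eMat dB b b)
        = if j = ⟨k, hk⟩ then WA else 1 := by
      intro j
      by_cases hj : j = (⟨k, hk⟩ : {j : Fin m // j ≠ i}) <;>
        simp [hj, sum_eMat_diag hdB, hWA]
    rw [Finset.prod_congr rfl fun j _ => this j,
      Finset.prod_ite_eq' Finset.univ (⟨k, hk⟩ : {j : Fin m // j ≠ i})]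
    simp
    ring
  have hii : (∑ h : {j : Fin m // j ≠ i} → Fin dB,
      W (a, if hj : i = i then x else h ⟨i, hj⟩)
        (c, if hj : i = i then y else h ⟨i, hj⟩) *
        ∏ j ∈ Finset.univ.erase i,
          eMat dB (if hj : j = i then x else h ⟨j, hj⟩)
            (if hj : j = i then y else h ⟨j, hj⟩))
      = W (a, x) (c, y) := by
    have : ∀ h : {j : Fin m // j ≠ i} → Fin dB,
        W (a, if hj : i = i then x else h ⟨i, hj⟩)
          (c, if hj : i = i then y else h ⟨i, hj⟩) *
          ∏ j ∈ Finset.univ.erase i,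
            eMat dB (if hj : j = i then x else h ⟨j, hj⟩)
              (if hj : j = i then y else h ⟨j, hj⟩)
        = W (a, x) (c, y) * ∏ j : {j : Fin m // j ≠ i}, eMat dB (h j) (h j) := by
      intro h
      rw [base h]
      simp
    rw [Finset.sum_congr rfl fun h _ => this h, ← Finset.mul_sum, sum1, mul_one]
  rw [← Finset.add_sum_erase _ _ (Finset.mem_univ i), hii]
  rw [Finset.sum_congr rfl fun k hk => hki k (Finset.mem_erase.mp hk).1,
    Finset.sum_const, Finset.card_erase_of_mem (Finset.mem_univ i), Finset.card_univ]
  have hcast : ((m - 1 : ℕ) : ℂ) = (m : ℂ) - 1 := by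
    have hm : 1 ≤ m := Fin.pos i
    push_cast [Nat.cast_sub hm]
    ring
  simp only [Fintype.card_fin]
  rw [nsmul_eq_mul, hcast]
  ring

/-- every Hermitian trace-one operator on `ℂ^{d_A} ⊗ ℂ^{d_B}`
admits, for any `n ≥ 3`, a Hermitian trace-one symmetric extension on
`ℂ^{d_A} ⊗ (ℂ^{d_B})^{⊗ (n-1)}` all of whose `(A, B_i)` marginals equal `W`. -/
theorem herm1_symmetric_extension
    (dA dB : ℕ) (hdA : 1 ≤ dA) (hdB : 1 ≤ dB) (n : ℕ) (hn : 3 ≤ n)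
    (W : Matrix (Fin dA × Fin dB) (Fin dA × Fin dB) ℂ)
    (hHerm : W.IsHermitian) (hTr : W.trace = 1) :
    ∃ W' : Matrix (Fin dA × (Fin (n - 1) → Fin dB))
        (Fin dA × (Fin (n - 1) → Fin dB)) ℂ,
      W'.IsHermitian ∧ W'.trace = 1 ∧
      ∀ i : Fin (n - 1), ptrExcept i W' = W := by
  exact ⟨extW dA dB (n - 1) W, herm_extW W hHerm, trace_extW hdB W hTr,
    fun i => ptr_extW hdB W i⟩
end

section
/- Let X, Y, Z denote the 2×2 Pauli matrices and I the 2×2 identity, and let R_s = (1/4)(I⊗I − X⊗X − Y⊗Y − Z⊗Z) be the singlet state. Fix n ≥ 2 and define the operator R on (ℂ²)^{⊗(n+1)} (factors labelled A, B₁, …, Bₙ) by R = (1/2^{n+1})(I^{⊗(n+1)} − Σ_{i=1}^{n} Ω_i), where Ω_i = X_A X_{B_i} + Y_A Y_{B_i} + Z_A Z_{B_i} and, e.g., X_A X_{B_i} denotes the operator acting as X on factor A, as X on factor B_i, and as the identity on all other factors. Then R is Hermitian with trace 1, and for every i ∈ {1, …, n}, the partial trace of R over all factors B_j with j ≠ i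 equals R_s. -/
open Matrix
open scoped Kronecker

namespace Polygamy

/-- Pauli `X`. -/
def pX : Matrix (Fin 2) (Fin 2) ℂ := !![0, 1; 1, 0]
/-- Pauli `Y`. -/
def pY : Matrix (Fin 2) (Fin 2) ℂ := !![0, -Complex.I; Complex.I, 0]
/-- Pauli `Z`. -/
def pZ : Matrix (Fin 2) (Fin 2) ℂ := !![1, 0; 0, -1]

/-- The singlet state `R_s = (1/4)(I⊗I − X⊗X − Y⊗Y − Z⊗Z)`. -/
noncomputable def singlet : Matrix (Fin 2 × Fin 2) (Fin 2 × Fin 2) ℂ :=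
  (1 / 4 : ℂ) • ((1 : Matrix (Fin 2) (Fin 2) ℂ) ⊗ₖ 1 - pX ⊗ₖ pX - pY ⊗ₖ pY - pZ ⊗ₖ pZ)

/-- The operator acting as `M` on the `A` factor, as `N` on the `B_i` factor,
and as the identity on all other `B`-factors of `ℂ² ⊗ (ℂ²)^{⊗ n}`. -/
noncomputable def twoSite {n : ℕ} (M N : Matrix (Fin 2) (Fin 2) ℂ) (i : Fin n) :
    Matrix (Fin 2 × (Fin n → Fin 2)) (Fin 2 × (Fin n → Fin 2)) ℂ :=
  fun p q => M p.1 q.1 * N (p.2 i) (q.2 i) *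
    ∏ j ∈ Finset.univ.erase i, (if p.2 j = q.2 j then (1 : ℂ) else 0)

/-- `Ω_i = X_A X_{B_i} + Y_A Y_{B_i} + Z_A Z_{B_i}`. -/
noncomputable def Omega {n : ℕ} (i : Fin n) :
    Matrix (Fin 2 × (Fin n → Fin 2)) (Fin 2 × (Fin n → Fin 2)) ℂ :=
  twoSite pX pX i + twoSite pY pY i + twoSite pZ pZ i

/-- Partial trace over all `B_j` with `j ≠ i`, onto the factors `A` and `B_i`. -/
noncomputable def ptrExcept {n : ℕ} (i : Fin n)
    (W : Matrix (Fin 2 × (Fin n → Fin 2)) (Fin 2 × (Fin n → Fin 2)) ℂ) :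
    Matrix (Fin 2 × Fin 2) (Fin 2 × Fin 2) ℂ :=
  fun p q => ∑ h : {j : Fin n // j ≠ i} → Fin 2,
    W (p.1, fun j => if hj : j = i then p.2 else h ⟨j, hj⟩)
      (q.1, fun j => if hj : j = i then q.2 else h ⟨j, hj⟩)

-- auxiliary lemmas

lemma pX_herm : pX.IsHermitian := by
  ext i j; fin_cases i <;> fin_cases j <;> simp [pX, Matrix.conjTranspose_apply]
lemma pY_herm : pY.IsHermitian := by
  ext i j; fin_cases i <;> fin_cases j <;> simp [pY, Matrix.conjTranspose_apply]
lemma pZ_herm : pZ.IsHermitian := by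
  ext i j; fin_cases i <;> fin_cases j <;> simp [pZ, Matrix.conjTranspose_apply]

lemma pX_trace : pX.trace = 0 := by simp [Matrix.trace, pX, Fin.sum_univ_two]
lemma pY_trace : pY.trace = 0 := by simp [Matrix.trace, pY, Fin.sum_univ_two]
lemma pZ_trace : pZ.trace = 0 := by simp [Matrix.trace, pZ, Fin.sum_univ_two]

lemma twoSite_herm {n : ℕ} {M N : Matrix (Fin 2) (Fin 2) ℂ}
    (hM : M.IsHermitian) (hN : N.IsHermitian) (i : Fin n) :
    (twoSite M N i).IsHermitian := by
  ext p q
  simp only [Matrix.conjTranspose_apply, twoSite, star_mul']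
  rw [hM.apply, hN.apply]
  congr 1
  rw [star_prod]
  simp only [apply_ite (star : ℂ → ℂ), star_one, star_zero]
  exact Finset.prod_congr rfl fun j _ => if_congr eq_comm rfl rfl

lemma trace_twoSite {n : ℕ} (M N : Matrix (Fin 2) (Fin 2) ℂ) (i : Fin n)
    (hM : M.trace = 0) : (twoSite M N i).trace = 0 := by
  have h1 : (twoSite M N i).trace
      = ∑ p : Fin 2 × (Fin n → Fin 2), M p.1 p.1 * N (p.2 i) (p.2 i) := by
    rw [Matrix.trace]
    exact Finset.sum_congr rfl fun p _ => by simp [Matrix.diag, twoSite]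
  rw [h1, Fintype.sum_prod_type]
  simp only [← Finset.mul_sum]
  rw [← Finset.sum_mul]
  have h2 : ∑ a, M a a = M.trace := rfl
  rw [h2, hM, zero_mul]


lemma key_fun_eq {n : ℕ} (i : Fin n) (a b : Fin 2) (h : {j : Fin n // j ≠ i} → Fin 2) :
    ((fun j => if hj : j = i then a else h ⟨j, hj⟩)
      = fun j => if hj : j = i then b else h ⟨j, hj⟩) ↔ a = b := by
  constructor
  · intro H
    simpa using congrFun H i
  · rintro rfl; rfl

lemma ptrExcept_one {n : ℕ} (i : Fin n) :
    ptrExcept i (1 : Matrix (Fin 2 × (Fin n → Fin 2)) (Fin 2 × (Fin n → Fin 2)) ℂ)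
      = (Fintype.card ({j : Fin n // j ≠ i} → Fin 2) : ℂ) • 1 := by
  ext p q
  simp only [ptrExcept, Matrix.one_apply, Prod.mk.injEq, key_fun_eq, Matrix.smul_apply,
    smul_eq_mul, Prod.ext_iff]
  by_cases hpq : p.1 = q.1 ∧ p.2 = q.2
  · simp [hpq]
  · simp [hpq]

lemma ptrExcept_twoSite_self {n : ℕ} (M N : Matrix (Fin 2) (Fin 2) ℂ) (i : Fin n) :
    ptrExcept i (twoSite M N i)
      = (Fintype.card ({j : Fin n // j ≠ i} → Fin 2) : ℂ) • (M ⊗ₖ N) := by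
  ext p q
  have hterm : ∀ h : {j : Fin n // j ≠ i} → Fin 2,
      twoSite M N i (p.1, fun j => if hj : j = i then p.2 else h ⟨j, hj⟩)
        (q.1, fun j => if hj : j = i then q.2 else h ⟨j, hj⟩) = M p.1 q.1 * N p.2 q.2 := by
    intro h
    simp only [twoSite, dif_pos]
    rw [Finset.prod_eq_one, mul_one]
    intro j hj
    rcases Finset.mem_erase.mp hj with ⟨hji, -⟩
    simp [dif_neg hji]
  simp only [ptrExcept]
  rw [Finset.sum_congr rfl fun h _ => hterm h]
  simp [Matrix.kroneckerMap_apply, mul_comm]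

lemma ptrExcept_twoSite_ne {n : ℕ} (M N : Matrix (Fin 2) (Fin 2) ℂ) {i k : Fin n}
    (hk : k ≠ i) (hN : N.trace = 0) : ptrExcept i (twoSite M N k) = 0 := by
  ext p q
  have hterm : ∀ h : {j : Fin n // j ≠ i} → Fin 2,
      twoSite M N k (p.1, fun j => if hj : j = i then p.2 else h ⟨j, hj⟩)
        (q.1, fun j => if hj : j = i then q.2 else h ⟨j, hj⟩)
      = M p.1 q.1 * (if p.2 = q.2 then (1:ℂ) else 0) * N (h ⟨k, hk⟩) (h ⟨k, hk⟩) := by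
    intro h
    simp only [twoSite, dif_neg hk]
    have hmem : i ∈ Finset.univ.erase k :=
      Finset.mem_erase.mpr ⟨Ne.symm hk, Finset.mem_univ i⟩
    rw [Finset.prod_eq_single_of_mem i hmem]
    · simp only [dif_pos]
      ring
    · intro j hj hji
      rcases Finset.mem_erase.mp hj with ⟨hjk, -⟩
      simp [dif_neg hji]
  have hzero : ∑ h : {j : Fin n // j ≠ i} → Fin 2, N (h ⟨k, hk⟩) (h ⟨k, hk⟩) = 0 := by
    rw [← Equiv.sum_comp (Equiv.funSplitAt (⟨k, hk⟩ : {j : Fin n // j ≠ i}) (Fin 2)).symm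
        (fun h => N (h ⟨k, hk⟩) (h ⟨k, hk⟩))]
    simp only [Equiv.funSplitAt_symm_apply, dif_pos]
    rw [Fintype.sum_prod_type]
    simp only [Finset.sum_const, Finset.card_univ, nsmul_eq_mul]
    rw [← Finset.mul_sum]
    have h2 : ∑ a, N a a = N.trace := rfl
    rw [h2, hN, mul_zero]
  simp only [ptrExcept]
  rw [Finset.sum_congr rfl fun h _ => hterm h, ← Finset.mul_sum, hzero, mul_zero]
  rfl

lemma ptrExcept_smul {n : ℕ} (i : Fin n) (c : ℂ)
    (W : Matrix (Fin 2 × (Fin n → Fin 2)) (Fin 2 × (Fin n → Fin 2)) ℂ) :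
    ptrExcept i (c • W) = c • ptrExcept i W := by
  ext p q
  simp [ptrExcept, Finset.mul_sum]

lemma ptrExcept_sub {n : ℕ} (i : Fin n)
    (W V : Matrix (Fin 2 × (Fin n → Fin 2)) (Fin 2 × (Fin n → Fin 2)) ℂ) :
    ptrExcept i (W - V) = ptrExcept i W - ptrExcept i V := by
  ext p q
  simp [ptrExcept, Finset.sum_sub_distrib]

lemma ptrExcept_sum {n : ℕ} (i : Fin n) {ι : Type*} (s : Finset ι)
    (W : ι → Matrix (Fin 2 × (Fin n → Fin 2)) (Fin 2 × (Fin n → Fin 2)) ℂ) :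
    ptrExcept i (∑ k ∈ s, W k) = ∑ k ∈ s, ptrExcept i (W k) := by
  ext p q
  simp only [ptrExcept, Matrix.sum_apply]
  rw [Finset.sum_comm]


lemma ptrExcept_add {n : ℕ} (i : Fin n)
    (W V : Matrix (Fin 2 × (Fin n → Fin 2)) (Fin 2 × (Fin n → Fin 2)) ℂ) :
    ptrExcept i (W + V) = ptrExcept i W + ptrExcept i V := by
  ext p q
  simp [ptrExcept, Finset.sum_add_distrib]

/-- polygamy of space-time correlations: the explicit operator
`R = (1/2^{n+1})(I^{⊗(n+1)} − Σ_i Ω_i)` is Hermitian with trace one and each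
of its `(A, B_i)` marginals is the singlet state `R_s`. -/
theorem singlet_polygamous_extension (n : ℕ) (hn : 2 ≤ n) :
    ((1 / (2 : ℂ) ^ (n + 1)) •
        ((1 : Matrix (Fin 2 × (Fin n → Fin 2)) (Fin 2 × (Fin n → Fin 2)) ℂ) -
          ∑ i : Fin n, Omega i)).IsHermitian ∧
    ((1 / (2 : ℂ) ^ (n + 1)) •
        ((1 : Matrix (Fin 2 × (Fin n → Fin 2)) (Fin 2 × (Fin n → Fin 2)) ℂ) -
          ∑ i : Fin n, Omega i)).trace = 1 ∧
    ∀ i : Fin n,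
      ptrExcept i ((1 / (2 : ℂ) ^ (n + 1)) •
        ((1 : Matrix (Fin 2 × (Fin n → Fin 2)) (Fin 2 × (Fin n → Fin 2)) ℂ) -
          ∑ i : Fin n, Omega i)) = singlet := by
  have hOm : ∀ i : Fin n, (Omega i).IsHermitian := fun i =>
    ((twoSite_herm pX_herm pX_herm i).add (twoSite_herm pY_herm pY_herm i)).add
      (twoSite_herm pZ_herm pZ_herm i)
  refine ⟨?_, ?_, ?_⟩
  · have hR : ((1 : Matrix (Fin 2 × (Fin n → Fin 2)) (Fin 2 × (Fin n → Fin 2)) ℂ)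
        - ∑ i : Fin n, Omega i).IsHermitian := by
      apply Matrix.IsHermitian.sub Matrix.isHermitian_one
      unfold Matrix.IsHermitian
      rw [Matrix.conjTranspose_sum]
      exact Finset.sum_congr rfl fun i _ => hOm i
    unfold Matrix.IsHermitian
    rw [Matrix.conjTranspose_smul, hR]
    congr 1
    simp
  · rw [Matrix.trace_smul, Matrix.trace_sub, Matrix.trace_sum, Matrix.trace_one]
    have hOt : ∀ i : Fin n, (Omega i).trace = 0 := fun i => by
      simp [Omega, Matrix.trace_add, trace_twoSite _ _ _ pX_trace,
        trace_twoSite _ _ _ pY_trace, trace_twoSite _ _ _ pZ_trace]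
    rw [Finset.sum_congr rfl fun i _ => hOt i]
    have hcard : (Fintype.card (Fin 2 × (Fin n → Fin 2)) : ℂ) = (2:ℂ) ^ (n+1) := by
      simp [Fintype.card_fun, pow_succ, mul_comm]
    rw [Finset.sum_const_zero, sub_zero, hcard, smul_eq_mul]
    field_simp
  · intro i
    rw [ptrExcept_smul, ptrExcept_sub, ptrExcept_one, ptrExcept_sum]
    have hsum : ∑ k : Fin n, ptrExcept i (Omega k)
        = (Fintype.card ({j : Fin n // j ≠ i} → Fin 2) : ℂ) •
            (pX ⊗ₖ pX + pY ⊗ₖ pY + pZ ⊗ₖ pZ) := by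
      rw [Finset.sum_eq_single i]
      · unfold Omega
        rw [ptrExcept_add, ptrExcept_add, ptrExcept_twoSite_self, ptrExcept_twoSite_self,
          ptrExcept_twoSite_self, smul_add, smul_add]
      · intro k _ hki
        unfold Omega
        rw [ptrExcept_add, ptrExcept_add, ptrExcept_twoSite_ne pX pX hki pX_trace,
          ptrExcept_twoSite_ne pY pY hki pY_trace, ptrExcept_twoSite_ne pZ pZ hki pZ_trace]
        simp
      · intro hi
        exact absurd (Finset.mem_univ i) hi
    rw [hsum]
    have hcard : (Fintype.card ({j : Fin n // j ≠ i} → Fin 2) : ℂ) = (2:ℂ) ^ (n-1) := by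
      rw [Fintype.card_fun]
      simp [Fintype.card_subtype_compl]
    rw [hcard, ← smul_sub, smul_smul]
    have hc : (1 / (2:ℂ)^(n+1)) * (2:ℂ)^(n-1) = 1/4 := by
      have h1 : n + 1 = (n - 1) + 2 := by omega
      have h2 : ((2:ℂ)^(n-1)) ≠ 0 := pow_ne_zero _ two_ne_zero
      rw [h1, pow_add]
      field_simp
      ring
    rw [hc]
    unfold singlet
    congr 1
    rw [Matrix.one_kronecker_one]
    abel

end Polygamy
end

section
/- Let R₁ and R₂ be invertible Hermitian trace-one operators on a finite-dimensional complex Hilbert space, and write |R_i| = √(R_i† R_i) (so |R₁|, |R₂| are positive definite). Define the space-time relative entropy S(R₁‖R₂) = Tr(|R₁| log|R₁|) − Tr(|R₁| log|R₂|) and the causality monotone C(R_i) = (‖R_i‖₁ − 1)/2, where ‖R_i‖₁ = Tr|R_i| is the trace norm. Then S(R₁‖R₂) ≥ Tr(|R₁| − |R₂|) = 2(C(R₁) − C(R₂)). -/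
open Matrix
open scoped ComplexOrder

/-- `|R| = √(Rᴴ R)`, the positive semidefinite absolute value of a matrix. -/
noncomputable def absM {n : ℕ} (R : Matrix (Fin n) (Fin n) ℂ) :
    Matrix (Fin n) (Fin n) ℂ :=
  (Matrix.posSemidef_conjTranspose_mul_self R).1.eigenvectorUnitary.1 *
    diagonal ((↑) ∘ (√·) ∘ (Matrix.posSemidef_conjTranspose_mul_self R).1.eigenvalues) *
    (star (Matrix.posSemidef_conjTranspose_mul_self R).1.eigenvectorUnitary : Matrix (Fin n) (Fin n) ℂ)

/-- The matrix logarithm via the continuous functional calculus. -/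
noncomputable def matLog {n : ℕ} (A : Matrix (Fin n) (Fin n) ℂ) :
    Matrix (Fin n) (Fin n) ℂ :=
  cfc Real.log A

/-!
Diagonalise `|R₁| = ∑ aᵢ uᵢuᵢ*` and `|R₂| = ∑ bⱼ vⱼvⱼ*`. With the overlap weights
`cᵢⱼ = |⟨uᵢ, vⱼ⟩|² ≥ 0` every trace `Tr(f(|R₁|) g(|R₂|))` equals `∑ cᵢⱼ f(aᵢ) g(bⱼ)`, so
Klein's inequality `Tr(A − B) ≤ Tr(A log A) − Tr(A log B)` reduces, term by term, to the scalar
bound `a − b ≤ a log a − a log b` for `0 ≤ a`, `0 < b`, which is `log (b / a) ≤ b / a − 1`.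
The eigenvalues of `|R₂|` are positive because `R₂` is invertible.
-/

lemma Real.sub_le_mul_log_sub_mul_log {a b : ℝ} (ha : 0 ≤ a) (hb : 0 < b) :
    a - b ≤ a * Real.log a - a * Real.log b := by
  rcases ha.eq_or_lt with rfl | ha
  · simpa using hb.le
  have h := mul_le_mul_of_nonneg_left (Real.log_le_sub_one_of_pos (div_pos hb ha)) ha.le
  rw [Real.log_div hb.ne' ha.ne', mul_sub, mul_sub, mul_div_cancel₀ _ ha.ne'] at h
  linarith

namespace Matrix

variable {m 𝕜 : Type*} [Fintype m] [DecidableEq m] [RCLike 𝕜]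

lemma trace_conjStarAlgAut_diagonal_mul (U V : unitaryGroup m 𝕜) (d e : m → 𝕜) :
    (Unitary.conjStarAlgAut 𝕜 _ U (diagonal d) *
        Unitary.conjStarAlgAut 𝕜 _ V (diagonal e)).trace =
      ∑ i, ∑ j, d i * e j * (‖(star U * V : unitaryGroup m 𝕜) i j‖ ^ 2 : ℝ) := by
  set W : Matrix m m 𝕜 := ((star U * V : unitaryGroup m 𝕜) : Matrix m m 𝕜)
  have hconj : Unitary.conjStarAlgAut 𝕜 _ U (diagonal d) *
      Unitary.conjStarAlgAut 𝕜 _ V (diagonal e) =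
        U * (diagonal d * W * diagonal e * star W) * (star U : unitaryGroup m 𝕜) := by
    simp [W, star_mul, mul_assoc]
  rw [hconj, trace_mul_cycle, Unitary.coe_star, Unitary.coe_star_mul_self, one_mul]
  simp only [trace, diag, mul_apply, star_apply, diagonal_apply, ite_mul, mul_ite, zero_mul,
    mul_zero, Finset.sum_ite_eq, Finset.sum_ite_eq', Finset.mem_univ, if_true]
  refine Finset.sum_congr rfl fun i _ => Finset.sum_congr rfl fun j _ => ?_
  rw [RCLike.ofReal_pow, ← RCLike.mul_conj, RCLike.star_def]
  ring

lemma IsHermitian.trace_cfc_mul_cfc {A B : Matrix m m 𝕜} (hA : A.IsHermitian)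
    (hB : B.IsHermitian) (f g : ℝ → ℝ) :
    (cfc f A * cfc g B).trace =
      ((∑ i, ∑ j, f (hA.eigenvalues i) * g (hB.eigenvalues j) *
        ‖(star hA.eigenvectorUnitary * hB.eigenvectorUnitary : unitaryGroup m 𝕜) i j‖ ^ 2 :
          ℝ) : 𝕜) := by
  rw [hA.cfc_eq, hB.cfc_eq, IsHermitian.cfc, IsHermitian.cfc, trace_conjStarAlgAut_diagonal_mul]
  push_cast
  rfl

theorem PosSemidef.trace_sub_le_trace_mul_log_sub {A B : Matrix m m 𝕜} (hA : A.PosSemidef)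
    (hB : B.PosDef) :
    (A - B).trace ≤ (A * cfc Real.log A).trace - (A * cfc Real.log B).trace := by
  have hA' : IsSelfAdjoint A := hA.1.isSelfAdjoint
  have hB' : IsSelfAdjoint B := hB.1.isSelfAdjoint
  -- Pad each trace to the form `Tr(f(A) g(B))`, so that all four are sums against one weight.
  have hA_trace : A.trace = (cfc (fun x : ℝ => x) A * cfc (fun _ : ℝ => (1 : ℝ)) B).trace := by
    rw [cfc_id' ℝ A, cfc_const_one ℝ B, mul_one]
  have hB_trace : B.trace = (cfc (fun _ : ℝ => (1 : ℝ)) A * cfc (fun x : ℝ => x) B).trace := by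
    rw [cfc_id' ℝ B, cfc_const_one ℝ A, one_mul]
  have hAlogA : A * cfc Real.log A =
      cfc (fun x => x * Real.log x) A * cfc (fun _ : ℝ => (1 : ℝ)) B := by
    rw [cfc_const_one ℝ B, mul_one,
      cfc_mul (fun x => x) Real.log A (hg := A.finite_real_spectrum.continuousOn _), cfc_id' ℝ A]
  have hAlogB : A * cfc Real.log B = cfc (fun x : ℝ => x) A * cfc Real.log B := by
    rw [cfc_id' ℝ A]
  rw [trace_sub, hA_trace, hB_trace, hAlogA, hAlogB, hA.1.trace_cfc_mul_cfc hB.1,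
    hA.1.trace_cfc_mul_cfc hB.1, hA.1.trace_cfc_mul_cfc hB.1, hA.1.trace_cfc_mul_cfc hB.1,
    ← RCLike.ofReal_sub, ← RCLike.ofReal_sub, RCLike.ofReal_le_ofReal]
  simp only [← Finset.sum_sub_distrib]
  refine Finset.sum_le_sum fun i _ => Finset.sum_le_sum fun j _ => ?_
  have hterm := mul_le_mul_of_nonneg_right
    (Real.sub_le_mul_log_sub_mul_log (hA.eigenvalues_nonneg i) (hB.eigenvalues_pos j))
    (sq_nonneg ‖(star hA.1.eigenvectorUnitary * hB.1.eigenvectorUnitary : unitaryGroup m 𝕜) i j‖)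
  linarith

end Matrix

lemma absM_eq_cfc_sqrt {n : ℕ} (R : Matrix (Fin n) (Fin n) ℂ) :
    absM R = cfc Real.sqrt (Rᴴ * R) := by
  rw [(posSemidef_conjTranspose_mul_self R).1.cfc_eq, IsHermitian.cfc,
    Unitary.conjStarAlgAut_apply]
  rfl

section

open scoped MatrixOrder

lemma absM_posSemidef {n : ℕ} (R : Matrix (Fin n) (Fin n) ℂ) : (absM R).PosSemidef := by
  rw [absM_eq_cfc_sqrt]
  exact (cfc_nonneg fun x _ => Real.sqrt_nonneg x).posSemidef

lemma absM_posDef {n : ℕ} {R : Matrix (Fin n) (Fin n) ℂ} (hR : IsUnit R) : (absM R).PosDef := by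
  have hRR : IsUnit (Rᴴ * R) := hR.star.mul hR
  have hRR_nonneg : 0 ≤ Rᴴ * R := (posSemidef_conjTranspose_mul_self R).nonneg
  rw [(absM_posSemidef R).posDef_iff_isUnit, absM_eq_cfc_sqrt,
    isUnit_cfc_iff Real.sqrt (Rᴴ * R) (ha := hRR_nonneg.isSelfAdjoint)]
  intro x hx
  have hx_pos : 0 < x := (spectrum_nonneg_of_nonneg hRR_nonneg hx).lt_of_ne
    fun h => spectrum.zero_notMem ℝ hRR (h ▸ hx)
  positivity

end

theorem spacetime_relative_entropy_lower_bound_general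
    (n : ℕ) (R₁ R₂ : Matrix (Fin n) (Fin n) ℂ)
    (hu₂ : IsUnit R₂) :
    (absM R₁ - absM R₂).trace ≤
      (absM R₁ * matLog (absM R₁)).trace - (absM R₁ * matLog (absM R₂)).trace ∧
    (absM R₁ - absM R₂).trace =
      2 * ((((absM R₁).trace - 1) / 2) - (((absM R₂).trace - 1) / 2)) :=
  ⟨(absM_posSemidef R₁).trace_sub_le_trace_mul_log_sub (absM_posDef hu₂),
    by rw [trace_sub]; ring⟩

/-- for invertible Hermitian trace-one operators `R₁, R₂`, the
space-time relative entropy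
`S(R₁‖R₂) = Tr(|R₁| log|R₁|) − Tr(|R₁| log|R₂|)` is bounded below by
`Tr(|R₁| − |R₂|) = 2(C(R₁) − C(R₂))`, where `C(R) = (Tr|R| − 1)/2`. -/
theorem spacetime_relative_entropy_lower_bound
    (n : ℕ) (R₁ R₂ : Matrix (Fin n) (Fin n) ℂ)
    (h₁ : R₁.IsHermitian) (h₂ : R₂.IsHermitian)
    (hTr₁ : R₁.trace = 1) (hTr₂ : R₂.trace = 1)
    (hu₁ : IsUnit R₁) (hu₂ : IsUnit R₂) :
    (absM R₁ - absM R₂).trace ≤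
      (absM R₁ * matLog (absM R₁)).trace - (absM R₁ * matLog (absM R₂)).trace ∧
    (absM R₁ - absM R₂).trace =
      2 * ((((absM R₁).trace - 1) / 2) - (((absM R₂).trace - 1) / 2)) :=
  spacetime_relative_entropy_lower_bound_general n R₁ R₂ hu₂
end

section
/- Let R₁ and R₂ be Hermitian trace-one operators on finite-dimensional complex Hilbert spaces, and let R₁ ⊗ R₂ denote their tensor (Kronecker) product. With S(R) = −Σ_i |λ_i| log|λ_i| over the eigenvalues λ_i of R, ‖R‖₁ the trace norm, and C(R) = (‖R‖₁ − 1)/2, one has the weak additivity S(R₁ ⊗ R₂) = (2C(R₂) + 1)·S(R₁) + (2C(R₁) + 1)·S(R₂), i.e. S(R₁ ⊗ R₂) = ‖R₂‖₁·S(R₁) + ‖R₁‖₁·S(R₂). -/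
/-!
Conjugating by `U₁ ⊗ U₂`, where `Uₖ` diagonalises `Rₖ`, diagonalises `R₁ ⊗ R₂` with diagonal
`λᵢ μⱼ`, so comparing characteristic polynomials shows that the eigenvalues of `R₁ ⊗ R₂` are the
products `λᵢ μⱼ` with multiplicity. With `η x = -x log x` one has
`η (|λ| |μ|) = |μ| η |λ| + |λ| η |μ|`, and summing over all pairs gives
`S(R₁ ⊗ R₂) = ‖R₂‖₁ S(R₁) + ‖R₁‖₁ S(R₂)`.
-/

open Matrix Polynomial
open scoped Kronecker

namespace Matrix.IsHermitian

variable {𝕜 : Type*} [RCLike 𝕜] {m n : Type*} [Fintype m] [DecidableEq m]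
  [Fintype n] [DecidableEq n] {A : Matrix m m 𝕜} {B : Matrix n n 𝕜}

theorem charpoly_kronecker (hA : A.IsHermitian) (hB : B.IsHermitian) :
    (A ⊗ₖ B).charpoly =
      ∏ p : m × n, (X - C ((hA.eigenvalues p.1 * hB.eigenvalues p.2 : ℝ) : 𝕜)) := by
  have hU := Unitary.star_mul_self_of_mem hA.eigenvectorUnitary.prop
  have hV := Unitary.star_mul_self_of_mem hB.eigenvectorUnitary.prop
  conv_lhs =>
    rw [hA.spectral_theorem, hB.spectral_theorem, Unitary.conjStarAlgAut_apply,
      Unitary.conjStarAlgAut_apply, mul_kronecker_mul, mul_kronecker_mul, charpoly_mul_comm,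
      ← mul_assoc, ← mul_kronecker_mul, hU, hV, one_kronecker_one, one_mul,
      diagonal_kronecker_diagonal, charpoly_diagonal]
  simp

theorem eigenvalues_kronecker (hA : A.IsHermitian) (hB : B.IsHermitian)
    (hAB : (A ⊗ₖ B).IsHermitian) :
    Finset.univ.val.map hAB.eigenvalues =
      Finset.univ.val.map fun p : m × n => hA.eigenvalues p.1 * hB.eigenvalues p.2 := by
  apply Multiset.map_injective (RCLike.ofReal_injective (K := 𝕜))
  rw [Multiset.map_map, Multiset.map_map, ← hAB.roots_charpoly_eq_eigenvalues,
    hA.charpoly_kronecker hB, Finset.prod_eq_multiset_prod,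
    ← roots_multiset_prod_X_sub_C (Multiset.map (RCLike.ofReal ∘ _) _), Multiset.map_map]
  rfl

theorem sum_eigenvalues_kronecker {M : Type*} [AddCommMonoid M] (hA : A.IsHermitian)
    (hB : B.IsHermitian) (hAB : (A ⊗ₖ B).IsHermitian) (f : ℝ → M) :
    ∑ i, f (hAB.eigenvalues i) = ∑ p : m × n, f (hA.eigenvalues p.1 * hB.eigenvalues p.2) := by
  have h := congrArg (fun s => (s.map f).sum) (hA.eigenvalues_kronecker hB hAB)
  simp only [Multiset.map_map, Function.comp_def] at h
  exact h

end Matrix.IsHermitian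

theorem Real.sum_negMulLog_mul {ι κ : Type*} [Fintype ι] [Fintype κ] (f : ι → ℝ) (g : κ → ℝ) :
    ∑ p : ι × κ, negMulLog (f p.1 * g p.2) =
      (∑ j, g j) * ∑ i, negMulLog (f i) + (∑ i, f i) * ∑ j, negMulLog (g j) := by
  simp only [Fintype.sum_prod_type, negMulLog_mul, Finset.sum_add_distrib, Finset.mul_sum,
    Finset.sum_mul]
  congr 1
  exact Finset.sum_comm

theorem Real.neg_sum_mul_log_eq_sum_negMulLog {ι : Type*} (s : Finset ι) (f : ι → ℝ) :
    -∑ i ∈ s, f i * log (f i) = ∑ i ∈ s, negMulLog (f i) := by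
  simp [negMulLog, Finset.sum_neg_distrib]

theorem spacetime_entropy_weak_additivity_general
    (n m : ℕ) (R₁ : Matrix (Fin n) (Fin n) ℂ) (R₂ : Matrix (Fin m) (Fin m) ℂ)
    (h₁ : R₁.IsHermitian) (h₂ : R₂.IsHermitian)
    (h12 : (R₁ ⊗ₖ R₂).IsHermitian) :
    (-∑ i, |h12.eigenvalues i| * Real.log |h12.eigenvalues i|) =
      (2 * (((∑ j, |h₂.eigenvalues j|) - 1) / 2) + 1) *
          (-∑ i, |h₁.eigenvalues i| * Real.log |h₁.eigenvalues i|) +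
        (2 * (((∑ i, |h₁.eigenvalues i|) - 1) / 2) + 1) *
          (-∑ j, |h₂.eigenvalues j| * Real.log |h₂.eigenvalues j|) := by
  simp only [Real.neg_sum_mul_log_eq_sum_negMulLog]
  rw [h₁.sum_eigenvalues_kronecker h₂ h12 fun x => Real.negMulLog |x|]
  simp only [abs_mul]
  exact (Real.sum_negMulLog_mul (|h₁.eigenvalues ·|) (|h₂.eigenvalues ·|)).trans (by ring)

/-- weak additivity of space-time entropy: for Hermitian
trace-one `R₁`, `R₂`, with `S(R) = −Σ |λ_i| log|λ_i|`, `‖R‖₁ = Σ |λ_i|` and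
`C(R) = (‖R‖₁ − 1)/2`, one has
`S(R₁ ⊗ R₂) = (2C(R₂)+1)·S(R₁) + (2C(R₁)+1)·S(R₂)`.
(The hypothesis `h12` records the — automatic — Hermiticity of `R₁ ⊗ R₂`.) -/
theorem spacetime_entropy_weak_additivity
    (n m : ℕ) (R₁ : Matrix (Fin n) (Fin n) ℂ) (R₂ : Matrix (Fin m) (Fin m) ℂ)
    (h₁ : R₁.IsHermitian) (h₂ : R₂.IsHermitian)
    (hTr₁ : R₁.trace = 1) (hTr₂ : R₂.trace = 1)
    (h12 : (R₁ ⊗ₖ R₂).IsHermitian) :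
    (-∑ i, |h12.eigenvalues i| * Real.log |h12.eigenvalues i|) =
      (2 * (((∑ j, |h₂.eigenvalues j|) - 1) / 2) + 1) *
          (-∑ i, |h₁.eigenvalues i| * Real.log |h₁.eigenvalues i|) +
        (2 * (((∑ i, |h₁.eigenvalues i|) - 1) / 2) + 1) *
          (-∑ j, |h₂.eigenvalues j| * Real.log |h₂.eigenvalues j|) :=
  spacetime_entropy_weak_additivity_general n m R₁ R₂ h₁ h₂ h12
end

section
/- Let d ≥ 2. There is no linear map Φ from d×d complex matrices to d²×d² complex matrices such that Φ(R) = R ⊗ R (Kronecker product) for every Hermitian trace-one d×d matrix R. -/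
open Matrix
open scoped Kronecker

/-- no-cloning of space-time states: for `d ≥ 2` there is no
linear map sending every Hermitian trace-one `d×d` matrix `R` to `R ⊗ R`. -/
theorem no_cloning_spacetime_states (d : ℕ) (hd : 2 ≤ d) :
    ¬∃ Φ : Matrix (Fin d) (Fin d) ℂ →ₗ[ℂ]
        Matrix (Fin d × Fin d) (Fin d × Fin d) ℂ,
      ∀ R : Matrix (Fin d) (Fin d) ℂ,
        R.IsHermitian → R.trace = 1 → Φ R = R ⊗ₖ R := by
  rintro ⟨Φ, hΦ⟩
  have hd1 : 1 < d := hd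
  set i0 : Fin d := ⟨0, by omega⟩
  set i1 : Fin d := ⟨1, by omega⟩
  have hne : i0 ≠ i1 := by simp [i0, i1, Fin.ext_iff]
  set R1 : Matrix (Fin d) (Fin d) ℂ := Matrix.single i0 i0 1
  set R2 : Matrix (Fin d) (Fin d) ℂ := Matrix.single i1 i1 1
  have herm1 : R1.IsHermitian := by
    simp only [Matrix.IsHermitian, R1]
    ext a b
    simp [Matrix.conjTranspose_apply, Matrix.single, and_comm]
  have herm2 : R2.IsHermitian := by
    simp only [Matrix.IsHermitian, R2]
    ext a b
    simp [Matrix.conjTranspose_apply, Matrix.single, and_comm]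
  have htr1 : R1.trace = 1 := by simp [R1]
  have htr2 : R2.trace = 1 := by simp [R2]
  set R : Matrix (Fin d) (Fin d) ℂ := (1/2 : ℂ) • R1 + (1/2 : ℂ) • R2
  have hermR : R.IsHermitian := by
    simp only [R]
    unfold Matrix.IsHermitian
    rw [conjTranspose_add, conjTranspose_smul, conjTranspose_smul, herm1, herm2]
    norm_num
  have htrR : R.trace = 1 := by
    simp [R, Matrix.trace_add, Matrix.trace_smul, htr1, htr2]
    ring
  have h1 := hΦ R1 herm1 htr1
  have h2 := hΦ R2 herm2 htr2
  have hR := hΦ R hermR htrR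
  have hlin : Φ R = (1/2 : ℂ) • (R1 ⊗ₖ R1) + (1/2 : ℂ) • (R2 ⊗ₖ R2) := by
    simp [R, map_add, _root_.map_smul, h1, h2]
  rw [hR] at hlin
  have := congrFun (congrFun hlin (i0, i1)) (i0, i1)
  simp only [Matrix.kroneckerMap_apply, Matrix.add_apply, Matrix.smul_apply,
    smul_eq_mul] at this
  have e1 : R1 i0 i0 = 1 := by simp [R1]
  have e2 : R2 i1 i1 = 1 := by simp [R2]
  have e3 : R1 i1 i1 = 0 := by simp [R1, Matrix.single]; exact hne
  have e4 : R2 i0 i0 = 0 := by simp [R2, Matrix.single]; exact fun h => hne h.symm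
  have eR00 : R i0 i0 = 1/2 := by simp [R, e1, e4]
  have eR11 : R i1 i1 = 1/2 := by simp [R, e2, e3]
  rw [eR00, eR11, e1, e3, e4, e2] at this
  norm_num at this
end

section
/- Let ρ = (1/2)(I + r₁X + r₂Y + r₃Z) be a 2×2 Hermitian trace-one matrix with r = √(r₁² + r₂² + r₃²) ≤ 1 (a qubit density matrix with Bloch vector (r₁,r₂,r₃)), where X, Y, Z are the Pauli matrices and I the 2×2 identity. Let S denote the 4×4 swap matrix on ℂ² ⊗ ℂ² (S(u ⊗ v) = v ⊗ u), and define R = (ρ ⊗ (I/2))·S + S·(ρ ⊗ (I/2)), i.e. the anticommutator {ρ ⊗ I/2, S}. Then R is Hermitian with trace 1, and its multiset of eigenvalues is {−1/2, 1/2, (1−r)/2, (1+r)/2}. -/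
/-!
Since `S (A ⊗ B) S = B ⊗ A`, the operator `R = {ρ ⊗ I/2, S}` equals `½ (ρ ⊗ I + I ⊗ ρ) S`, a product
of two commuting factors. If `ρ` has eigenvalues `λ₁, λ₂`, the antisymmetric vector contributes
`½ (λ₁ + λ₂) · (-1) = -1/2` and the symmetric subspace contributes `λ₁`, `λ₂` and `½ (λ₁ + λ₂) = 1/2`;
for a Bloch state `λ₁,₂ = (1 ± r)/2`. In characteristic-polynomial form this holds for every `2 × 2`
matrix `A`: `charpoly {A ⊗ I/2, S} = charpoly A · (X² - (tr A / 2)²)`, which is checked by direct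
expansion in the product basis.
-/

open Matrix
open scoped Kronecker

namespace TemporalPDO

/-- Pauli `X`. -/
def pX : Matrix (Fin 2) (Fin 2) ℂ := !![0, 1; 1, 0]
/-- Pauli `Y`. -/
def pY : Matrix (Fin 2) (Fin 2) ℂ := !![0, -Complex.I; Complex.I, 0]
/-- Pauli `Z`. -/
def pZ : Matrix (Fin 2) (Fin 2) ℂ := !![1, 0; 0, -1]

/-- The swap operator on `ℂ² ⊗ ℂ²`: `S(u ⊗ v) = v ⊗ u`. -/
def swap : Matrix (Fin 2 × Fin 2) (Fin 2 × Fin 2) ℂ :=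
  Matrix.of fun p q => if p.1 = q.2 ∧ p.2 = q.1 then 1 else 0

open Polynomial

theorem _root_.IsSelfAdjoint.anticommutator {R : Type*} [NonUnitalSemiring R] [StarRing R]
    {a b : R} (ha : IsSelfAdjoint a) (hb : IsSelfAdjoint b) : IsSelfAdjoint (a * b + b * a) := by
  rw [isSelfAdjoint_iff, star_add, star_mul, star_mul, ha.star_eq, hb.star_eq, add_comm]

theorem _root_.Matrix.IsHermitian.kronecker {α l m : Type*} [CommMagma α] [StarMul α]
    {A : Matrix l l α} {B : Matrix m m α} (hA : A.IsHermitian) (hB : B.IsHermitian) :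
    (A ⊗ₖ B).IsHermitian := by
  rw [IsHermitian, conjTranspose_kronecker, hA.eq, hB.eq]

theorem _root_.Matrix.IsHermitian.map_eigenvalues_eq_of_charpoly_eq {𝕜 n : Type*} [RCLike 𝕜]
    [Fintype n] [DecidableEq n] {A : Matrix n n 𝕜} (hA : A.IsHermitian) {s : Multiset ℝ}
    (h : A.charpoly = (s.map fun a : ℝ => X - C (a : 𝕜)).prod) :
    Finset.univ.val.map hA.eigenvalues = s := by
  apply Multiset.map_injective (RCLike.ofReal_injective (K := 𝕜))
  rw [Multiset.map_map, ← hA.roots_charpoly_eq_eigenvalues, h]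
  simpa [Multiset.map_map] using roots_multiset_prod_X_sub_C (s.map ((↑) : ℝ → 𝕜))

theorem swap_isHermitian : swap.IsHermitian := by
  ext p q
  simp only [swap, conjTranspose_apply, of_apply]
  split_ifs <;> simp_all [eq_comm, and_comm]

noncomputable def blochState (r₁ r₂ r₃ : ℝ) : Matrix (Fin 2) (Fin 2) ℂ :=
  (1 / 2 : ℂ) • (1 + (r₁ : ℂ) • pX + (r₂ : ℂ) • pY + (r₃ : ℂ) • pZ)

theorem blochState_eq (r₁ r₂ r₃ : ℝ) :
    blochState r₁ r₂ r₃ =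
      !![(1 + (r₃ : ℂ)) / 2, (r₁ - r₂ * Complex.I) / 2; (r₁ + r₂ * Complex.I) / 2, (1 - r₃) / 2] := by
  ext i j
  fin_cases i <;> fin_cases j <;> simp [blochState, pX, pY, pZ] <;> ring

theorem blochState_isHermitian (r₁ r₂ r₃ : ℝ) : (blochState r₁ r₂ r₃).IsHermitian := by
  rw [blochState_eq]
  ext i j
  fin_cases i <;> fin_cases j <;> simp [Complex.ext_iff]

theorem trace_blochState (r₁ r₂ r₃ : ℝ) : (blochState r₁ r₂ r₃).trace = 1 := by
  rw [blochState_eq, trace_fin_two_of]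
  ring

theorem charpoly_blochState (r₁ r₂ r₃ : ℝ) :
    (blochState r₁ r₂ r₃).charpoly =
      (X - C (((1 - √(r₁ ^ 2 + r₂ ^ 2 + r₃ ^ 2)) / 2 : ℝ) : ℂ)) *
        (X - C (((1 + √(r₁ ^ 2 + r₂ ^ 2 + r₃ ^ 2)) / 2 : ℝ) : ℂ)) := by
  have hnorm : ((√(r₁ ^ 2 + r₂ ^ 2 + r₃ ^ 2) : ℝ) : ℂ) ^ 2 = (r₁ : ℂ) ^ 2 + r₂ ^ 2 + r₃ ^ 2 := by
    exact_mod_cast Real.sq_sqrt (by positivity)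
  rw [charpoly_fin_two, trace_blochState, blochState_eq, det_fin_two_of]
  refine Polynomial.funext fun x => ?_
  simp only [eval_add, eval_sub, eval_mul, eval_pow, eval_X, eval_C]
  push_cast
  linear_combination (1 / 4 : ℂ) * hnorm + ((r₂ : ℂ) ^ 2 / 4) * Complex.I_sq

noncomputable def temporalPDO (A : Matrix (Fin 2) (Fin 2) ℂ) :
    Matrix (Fin 2 × Fin 2) (Fin 2 × Fin 2) ℂ :=
  (A ⊗ₖ ((1 / 2 : ℂ) • (1 : Matrix (Fin 2) (Fin 2) ℂ))) * swap +
    swap * (A ⊗ₖ ((1 / 2 : ℂ) • (1 : Matrix (Fin 2) (Fin 2) ℂ)))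

theorem temporalPDO_apply (A : Matrix (Fin 2) (Fin 2) ℂ) (i k j l : Fin 2) :
    temporalPDO A (i, k) (j, l) =
      ((if k = j then A i l else 0) + (if i = l then A k j else 0)) / 2 := by
  fin_cases i <;> fin_cases k <;> fin_cases j <;> fin_cases l <;>
    simp [temporalPDO, swap, mul_apply, Fintype.sum_prod_type, Fin.sum_univ_two, one_apply] <;>
    ring

theorem temporalPDO_isHermitian {A : Matrix (Fin 2) (Fin 2) ℂ} (hA : A.IsHermitian) :
    (temporalPDO A).IsHermitian :=
  IsSelfAdjoint.anticommutator (hA.kronecker (isHermitian_one.smul (by simp))) swap_isHermitian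

theorem trace_temporalPDO (A : Matrix (Fin 2) (Fin 2) ℂ) : (temporalPDO A).trace = A.trace := by
  simp [trace, Fintype.sum_prod_type, temporalPDO_apply]

theorem reindex_temporalPDO (A : Matrix (Fin 2) (Fin 2) ℂ) :
    reindex finProdFinEquiv finProdFinEquiv (temporalPDO A) =
      !![A 0 0, A 0 1 / 2, A 0 1 / 2, 0;
        A 1 0 / 2, 0, A.trace / 2, A 0 1 / 2;
        A 1 0 / 2, A.trace / 2, 0, A 0 1 / 2;
        0, A 1 0 / 2, A 1 0 / 2, A 1 1] := by
  ext i j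
  fin_cases i <;> fin_cases j <;>
    simp [temporalPDO_apply, trace_fin_two, finProdFinEquiv, Fin.divNat, Fin.modNat]
  all_goals ring

theorem charpoly_temporalPDO (A : Matrix (Fin 2) (Fin 2) ℂ) :
    (temporalPDO A).charpoly = A.charpoly * (X ^ 2 - C (A.trace / 2) ^ 2) := by
  rw [← charpoly_reindex finProdFinEquiv, reindex_temporalPDO, charpoly_fin_two, Matrix.charpoly]
  simp [Fin.sum_univ_succ, det_succ_row_zero, charmatrix_apply, trace_fin_two, Fin.succAbove]
  refine Polynomial.funext fun x => ?_
  simp only [eval_add, eval_sub, eval_mul, eval_neg, eval_pow, eval_X, eval_C]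
  ring

-- `•` binds more loosely than `⊗ₖ`, so here the factor `1/2` of `ρ` sits outside the product.
theorem temporalPDO_blochState (r₁ r₂ r₃ : ℝ) :
    temporalPDO (blochState r₁ r₂ r₃) =
      (1 / 2 : ℂ) • (1 + (r₁ : ℂ) • pX + (r₂ : ℂ) • pY + (r₃ : ℂ) • pZ)
          ⊗ₖ ((1 / 2 : ℂ) • (1 : Matrix (Fin 2) (Fin 2) ℂ)) * swap +
        swap * (1 / 2 : ℂ) • (1 + (r₁ : ℂ) • pX + (r₂ : ℂ) • pY + (r₃ : ℂ) • pZ)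
          ⊗ₖ ((1 / 2 : ℂ) • (1 : Matrix (Fin 2) (Fin 2) ℂ)) := by
  rw [temporalPDO, blochState, smul_kronecker]

theorem temporal_pdo_spectrum_general
    (r₁ r₂ r₃ : ℝ) :
    ∃ hR : (((1 / 2 : ℂ) • (1 + (r₁ : ℂ) • pX + (r₂ : ℂ) • pY + (r₃ : ℂ) • pZ)
          ⊗ₖ ((1 / 2 : ℂ) • (1 : Matrix (Fin 2) (Fin 2) ℂ))) * swap +
        swap * ((1 / 2 : ℂ) • (1 + (r₁ : ℂ) • pX + (r₂ : ℂ) • pY + (r₃ : ℂ) • pZ)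
          ⊗ₖ ((1 / 2 : ℂ) • (1 : Matrix (Fin 2) (Fin 2) ℂ)))).IsHermitian,
      (((1 / 2 : ℂ) • (1 + (r₁ : ℂ) • pX + (r₂ : ℂ) • pY + (r₃ : ℂ) • pZ)
          ⊗ₖ ((1 / 2 : ℂ) • (1 : Matrix (Fin 2) (Fin 2) ℂ))) * swap +
        swap * ((1 / 2 : ℂ) • (1 + (r₁ : ℂ) • pX + (r₂ : ℂ) • pY + (r₃ : ℂ) • pZ)
          ⊗ₖ ((1 / 2 : ℂ) • (1 : Matrix (Fin 2) (Fin 2) ℂ)))).trace = 1 ∧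
      Finset.univ.val.map hR.eigenvalues =
        ({-(1 / 2), 1 / 2,
          (1 - Real.sqrt (r₁ ^ 2 + r₂ ^ 2 + r₃ ^ 2)) / 2,
          (1 + Real.sqrt (r₁ ^ 2 + r₂ ^ 2 + r₃ ^ 2)) / 2} : Multiset ℝ) := by
  rw [← temporalPDO_blochState]
  have hR := temporalPDO_isHermitian (blochState_isHermitian r₁ r₂ r₃)
  refine ⟨hR, (trace_temporalPDO _).trans (trace_blochState r₁ r₂ r₃), ?_⟩
  apply hR.map_eigenvalues_eq_of_charpoly_eq
  rw [charpoly_temporalPDO, charpoly_blochState, trace_blochState]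
  simp only [Multiset.insert_eq_cons, Multiset.map_cons, Multiset.map_singleton,
    Multiset.prod_cons, Multiset.prod_singleton, Complex.coe_algebraMap, Complex.ofReal_neg, C_neg]
  push_cast
  ring

/-- for a qubit state `ρ` with Bloch vector `(r₁, r₂, r₃)` of
norm `r ≤ 1`, the two-time pseudo-density operator
`R = {ρ ⊗ I/2, SWAP}` is Hermitian with trace `1` and has eigenvalue multiset
`{−1/2, 1/2, (1−r)/2, (1+r)/2}`. -/
theorem temporal_pdo_spectrum
    (r₁ r₂ r₃ : ℝ) (hr : Real.sqrt (r₁ ^ 2 + r₂ ^ 2 + r₃ ^ 2) ≤ 1) :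
    ∃ hR : (((1 / 2 : ℂ) • (1 + (r₁ : ℂ) • pX + (r₂ : ℂ) • pY + (r₃ : ℂ) • pZ)
          ⊗ₖ ((1 / 2 : ℂ) • (1 : Matrix (Fin 2) (Fin 2) ℂ))) * swap +
        swap * ((1 / 2 : ℂ) • (1 + (r₁ : ℂ) • pX + (r₂ : ℂ) • pY + (r₃ : ℂ) • pZ)
          ⊗ₖ ((1 / 2 : ℂ) • (1 : Matrix (Fin 2) (Fin 2) ℂ)))).IsHermitian,
      (((1 / 2 : ℂ) • (1 + (r₁ : ℂ) • pX + (r₂ : ℂ) • pY + (r₃ : ℂ) • pZ)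
          ⊗ₖ ((1 / 2 : ℂ) • (1 : Matrix (Fin 2) (Fin 2) ℂ))) * swap +
        swap * ((1 / 2 : ℂ) • (1 + (r₁ : ℂ) • pX + (r₂ : ℂ) • pY + (r₃ : ℂ) • pZ)
          ⊗ₖ ((1 / 2 : ℂ) • (1 : Matrix (Fin 2) (Fin 2) ℂ)))).trace = 1 ∧
      Finset.univ.val.map hR.eigenvalues =
        ({-(1 / 2), 1 / 2,
          (1 - Real.sqrt (r₁ ^ 2 + r₂ ^ 2 + r₃ ^ 2)) / 2,
          (1 + Real.sqrt (r₁ ^ 2 + r₂ ^ 2 + r₃ ^ 2)) / 2} : Multiset ℝ) :=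
  temporal_pdo_spectrum_general r₁ r₂ r₃

end TemporalPDO
end
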